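/- arXiv:math/0601058 — 13 statements merged into one kernel-verified Lean document; each statement's English description precedes it below -/
import Mathlib

section
/- Let S be a join-semilattice with least element 0, let P be a poset, and let μ be an S-valued p-measure on P satisfying: (a) for all x ≤ y in P and all a, b ∈ S with μ(y,x) ≤ a ⊔ b, there exist a positive integer n and elements x = z_0 ≤ z_1 ≤ ⋯ ≤ z_n = y of P such that for every i < n either μ(z_{i+1}, z_i) ≤ a or μ(z_{i+1}, z_i) ≤ b; (b) every element of S is the join of a finite subset of Σ = {μ(y,x) : x ≤ y in P}. Then S is distributive. -/
/-!
Call `c` *split* by `(a, b)` if `c = x ⊔ y` with `x ≤ a` and `y ≤ b`. Split elements form a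
sup-closed set containing everything below `a` or below `b`. For `x ≤ y`, condition (a) refines
`x ≤ y` into a chain whose steps each lie below `a` or `b`; by the triangle inequality `μ y x` is
the join of these steps (each of which is at most `μ y x`), so `μ y x` is split. By (b) every
`c ≤ a ⊔ b` is a finite join of such values, each again below `a ⊔ b`, hence split.
-/

open Finset

section Split

variable {S : Type*} [SemilatticeSup S]

def IsSplitBy (a b c : S) : Prop := ∃ x y : S, x ≤ a ∧ y ≤ b ∧ c = x ⊔ y

variable {a b : S}

theorem IsSplitBy.sup {c d : S} (hc : IsSplitBy a b c) (hd : IsSplitBy a b d) :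
    IsSplitBy a b (c ⊔ d) := by
  obtain ⟨x, y, hx, hy, rfl⟩ := hc
  obtain ⟨x', y', hx', hy', rfl⟩ := hd
  exact ⟨x ⊔ x', y ⊔ y', sup_le hx hx', sup_le hy hy', sup_sup_sup_comm x y x' y'⟩

variable [OrderBot S]

theorem isSplitBy_bot : IsSplitBy a b ⊥ := ⟨⊥, ⊥, bot_le, bot_le, (bot_sup_eq ⊥).symm⟩

theorem isSplitBy_of_le_left {c : S} (h : c ≤ a) : IsSplitBy a b c :=
  ⟨c, ⊥, h, bot_le, sup_bot_eq c |>.symm⟩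

theorem isSplitBy_of_le_right {c : S} (h : c ≤ b) : IsSplitBy a b c :=
  ⟨⊥, c, bot_le, h, bot_sup_eq c |>.symm⟩

theorem isSplitBy_finset_sup {ι : Type*} {s : Finset ι} {f : ι → S}
    (h : ∀ i ∈ s, IsSplitBy a b (f i)) : IsSplitBy a b (s.sup f) :=
  Finset.sup_induction isSplitBy_bot (fun _ hc _ hd => hc.sup hd) h

end Split

theorem chain_le_of_le {P : Type*} [Preorder P] {z : ℕ → P} {n : ℕ}
    (hz : ∀ i < n, z i ≤ z (i + 1)) {i j : ℕ} (hij : i ≤ j) (hjn : j ≤ n) : z i ≤ z j := by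
  induction j, hij using Nat.le_induction with
  | base => exact le_rfl
  | succ k _ ih => exact (ih (by omega)).trans (hz k (by omega))

section PMeasure

variable {S : Type*} [SemilatticeSup S] [OrderBot S] {P : Type*} {μ : P → P → S}

theorem pMeasure_le_sup_steps (htri : ∀ x y z : P, μ x z ≤ μ x y ⊔ μ y z)
    (hrefl : ∀ x : P, μ x x = ⊥) (z : ℕ → P) (n : ℕ) :
    μ (z n) (z 0) ≤ (range n).sup fun i => μ (z (i + 1)) (z i) := by
  induction n with
  | zero => simp [hrefl]
  | succ n ih =>
    rw [range_add_one, sup_insert]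
    exact (htri _ (z n) _).trans (sup_le_sup_left ih _)

variable [Preorder P] (htri : ∀ x y z : P, μ x z ≤ μ x y ⊔ μ y z)
  (hzero : ∀ x y : P, x ≤ y → μ x y = ⊥)
include htri hzero

theorem pMeasure_mono {x y u v : P} (hvy : v ≤ y) (hxu : x ≤ u) : μ v u ≤ μ y x :=
  calc μ v u ≤ μ v y ⊔ (μ y x ⊔ μ x u) := (htri v y u).trans (sup_le_sup_left (htri y x u) _)
    _ = μ y x := by rw [hzero v y hvy, hzero x u hxu, bot_sup_eq, sup_bot_eq]

theorem pMeasure_eq_sup_steps {z : ℕ → P} {n : ℕ} (hz : ∀ i < n, z i ≤ z (i + 1)) :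
    μ (z n) (z 0) = (range n).sup fun i => μ (z (i + 1)) (z i) := by
  refine le_antisymm (pMeasure_le_sup_steps htri (fun x => hzero x x le_rfl) z n) ?_
  refine Finset.sup_le fun i hi => ?_
  have hi : i < n := mem_range.mp hi
  exact pMeasure_mono htri hzero (chain_le_of_le hz hi le_rfl)
    (chain_le_of_le hz (Nat.zero_le i) hi.le)

theorem isSplitBy_pMeasure {a b : S}
    (hrefine : ∀ x y : P, x ≤ y → μ y x ≤ a ⊔ b →
      ∃ n : ℕ, ∃ z : ℕ → P, z 0 = x ∧ z n = y ∧
        ∀ i < n, z i ≤ z (i + 1) ∧ (μ (z (i + 1)) (z i) ≤ a ∨ μ (z (i + 1)) (z i) ≤ b))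
    {x y : P} (hxy : x ≤ y) (hab : μ y x ≤ a ⊔ b) : IsSplitBy a b (μ y x) := by
  obtain ⟨n, z, rfl, rfl, hz⟩ := hrefine x y hxy hab
  rw [pMeasure_eq_sup_steps htri hzero fun i hi => (hz i hi).1]
  refine isSplitBy_finset_sup fun i hi => ?_
  exact (hz i (mem_range.mp hi)).2.elim isSplitBy_of_le_left isSplitBy_of_le_right

end PMeasure

/-- If a join-semilattice `S` with zero carries an `S`-valued p-measure `μ`
on a poset `P` satisfying the refinement condition (a) and such that every element of `S` is
a finite join of Boolean values (b), then `S` is distributive. -/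
theorem stmt1 (S : Type*) [SemilatticeSup S] [OrderBot S]
    (P : Type*) [PartialOrder P] (μ : P → P → S)
    (htri : ∀ x y z : P, μ x z ≤ μ x y ⊔ μ y z)
    (hzero : ∀ x y : P, x ≤ y → μ x y = ⊥)
    (ha : ∀ x y : P, x ≤ y → ∀ a b : S, μ y x ≤ a ⊔ b →
      ∃ n : ℕ, 0 < n ∧ ∃ z : ℕ → P, z 0 = x ∧ z n = y ∧
        ∀ i < n, z i ≤ z (i + 1) ∧ (μ (z (i + 1)) (z i) ≤ a ∨ μ (z (i + 1)) (z i) ≤ b))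
    (hb : ∀ s : S, ∃ F : Finset (P × P), (∀ p ∈ F, p.2 ≤ p.1) ∧
      s = F.sup fun p => μ p.1 p.2) :
    ∀ a b c : S, c ≤ a ⊔ b → ∃ x y : S, x ≤ a ∧ y ≤ b ∧ c = x ⊔ y := by
  intro a b c hc
  have hrefine x y hxy hab := (ha x y hxy a b hab).imp fun _ => And.right
  obtain ⟨F, hF, rfl⟩ := hb c
  exact isSplitBy_finset_sup fun p hp =>
    isSplitBy_pMeasure htri hzero hrefine (hF p hp) ((le_sup hp).trans hc)
end

section
/- Let S be a distributive join-semilattice with least element 0. Then S is the directed union of its finite distributive ⟨∨,0⟩-subsemilattices; that is, every finite subset F of S is contained in a finite subset T of S such that 0 ∈ T, T is closed under binary joins, and T is a distributive join-semilattice under the induced order. -/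
/-!
The ideals of a distributive join-semilattice `S` form a distributive lattice, so the principal
ideals `↓s`, `s ∈ F`, lie in a finite distributive sublattice `L` of `Id S`. Pick for every
join-irreducible `p ∈ L` an element `w p ∈ p` so large that `w p ∉ y` for every `y ∈ L` with
`p ≰ y`, and put `e x = ⋁ {w p | p ≤ x join-irreducible}`. Join-irreducibles of a distributive
lattice are join-prime, so `e : L → S` preserves `⊔` and `⊥`; it reflects the order, and with
`w` chosen large enough it sends `↓s` to `s`. Its image is then a copy of `L` containing `F`,
and it inherits the distributivity of `L`.
-/

open Finset Order

namespace Order.Ideal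

variable {S : Type*} [SemilatticeSup S] [OrderBot S]

abbrev distribLattice
    (hdist : ∀ a b c : S, c ≤ a ⊔ b → ∃ x y : S, x ≤ a ∧ y ≤ b ∧ c = x ⊔ y) :
    DistribLattice (Ideal S) :=
  DistribLattice.ofInfSupLe fun I J K x ⟨hxI, hxJK⟩ => by
    obtain ⟨j, hj, k, hk, hx⟩ := mem_sup.1 hxJK
    obtain ⟨y, z, hy, hz, rfl⟩ := hdist j k x hx
    exact ⟨y, ⟨I.lower le_sup_left hxI, J.lower hy hj⟩,
      z, ⟨I.lower le_sup_right hxI, K.lower hz hk⟩, le_rfl⟩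

theorem exists_le_finsetSup_of_mem_finsetSup {ι : Type*} {I : ι → Ideal S} {s : Finset ι} {a : S}
    (ha : a ∈ s.sup I) : ∃ u : ι → S, (∀ i, u i ∈ I i) ∧ a ≤ s.sup u := by
  classical
  induction s using Finset.induction_on generalizing a with
  | empty => exact ⟨fun _ => ⊥, fun i => bot_mem (I i), by rw [sup_empty]; exact ha⟩
  | insert i s hi ih =>
    rw [sup_insert, mem_sup] at ha
    obtain ⟨b, hb, c, hc, habc⟩ := ha
    obtain ⟨u, hu, hcu⟩ := ih hc
    refine ⟨Function.update u i b, fun j => ?_, ?_⟩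
    · rcases eq_or_ne j i with rfl | hj
      · simpa using hb
      · simpa [hj] using hu j
    · have hs : s.sup (Function.update u i b) = s.sup u :=
        sup_congr rfl fun j hj => Function.update_of_ne (ne_of_mem_of_not_mem hj hi) _ _
      rw [sup_insert, hs, Function.update_self]
      exact habc.trans (sup_le_sup_left hcu b)

end Order.Ideal

theorem Sublattice.exists_finite_superset {α : Type*} [DistribLattice α] [BoundedOrder α]
    (s : Finset α) : ∃ L : Sublattice α, (L : Set α).Finite ∧ ↑s ⊆ (L : Set α) ∧ ⊥ ∈ L := by
  classical
  -- the sublattice generated by `s`, in disjunctive normal form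
  let nf : Finset (Finset α) → α := fun 𝒜 => 𝒜.sup fun A => A.inf id
  let P : Set (Finset (Finset α)) := ↑s.powerset.powerset
  have hP : ∀ {𝒜}, 𝒜 ∈ P ↔ ∀ A ∈ 𝒜, A ⊆ s := by
    intro 𝒜
    rw [mem_coe, mem_powerset, Finset.subset_iff]
    simp only [mem_powerset]
  refine ⟨⟨nf '' P, ?_, ?_⟩, s.powerset.powerset.finite_toSet.image nf, ?_,
    ⟨∅, by simp [hP], rfl⟩⟩
  · rintro _ ⟨𝒜, h𝒜, rfl⟩ _ ⟨ℬ, hℬ, rfl⟩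
    refine ⟨𝒜 ∪ ℬ, hP.2 fun A hA => ?_, sup_union⟩
    rcases mem_union.1 hA with hA | hA
    exacts [hP.1 h𝒜 A hA, hP.1 hℬ A hA]
  · rintro _ ⟨𝒜, h𝒜, rfl⟩ _ ⟨ℬ, hℬ, rfl⟩
    refine ⟨(𝒜 ×ˢ ℬ).image fun p => p.1 ∪ p.2, hP.2 ?_, ?_⟩
    · simp only [mem_image, mem_product]
      rintro _ ⟨p, ⟨h1, h2⟩, rfl⟩
      exact union_subset (hP.1 h𝒜 _ h1) (hP.1 hℬ _ h2)
    · simp only [nf, sup_inf_sup, sup_image]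
      exact sup_congr rfl fun p _ => inf_union
  · intro a ha
    exact ⟨{{a}}, hP.2 (by simpa using ha), by simp [nf]⟩

section SupIrred

variable {L : Type*} [Fintype L]

open scoped Classical in
noncomputable def supIrredBelow [SemilatticeSup L] (x : L) : Finset L :=
  {p | SupIrred p ∧ p ≤ x}

theorem mem_supIrredBelow [SemilatticeSup L] {x p : L} :
    p ∈ supIrredBelow x ↔ SupIrred p ∧ p ≤ x := by
  simp [supIrredBelow]

theorem sup_supIrredBelow [SemilatticeSup L] [OrderBot L] (x : L) :
    (supIrredBelow x).sup id = x := by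
  refine le_antisymm (Finset.sup_le fun p hp => (mem_supIrredBelow.1 hp).2) ?_
  obtain ⟨s, rfl, hs⟩ := exists_supIrred_decomposition x
  exact Finset.sup_mono fun p hp => mem_supIrredBelow.2 ⟨hs hp, le_sup (f := id) hp⟩

theorem supIrredBelow_bot [SemilatticeSup L] [OrderBot L] : supIrredBelow (⊥ : L) = ∅ :=
  eq_empty_of_forall_notMem fun _ hp =>
    (mem_supIrredBelow.1 hp).1.ne_bot (le_bot_iff.1 (mem_supIrredBelow.1 hp).2)

theorem supIrredBelow_sup [DistribLattice L] [DecidableEq L] (x y : L) :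
    supIrredBelow (x ⊔ y) = supIrredBelow x ∪ supIrredBelow y := by
  ext p
  simp only [mem_union, mem_supIrredBelow]
  constructor
  · rintro ⟨hp, hpxy⟩
    exact (hp.supPrime.le_sup.1 hpxy).imp (⟨hp, ·⟩) (⟨hp, ·⟩)
  · rintro (⟨hp, hpx⟩ | ⟨hp, hpy⟩)
    exacts [⟨hp, le_sup_of_le_left hpx⟩, ⟨hp, le_sup_of_le_right hpy⟩]

end SupIrred

section Extension

variable {L S : Type*} [Fintype L] [SemilatticeSup S] [OrderBot S]

theorem exists_supIrred_weights [SemilatticeSup L] [OrderBot L] (ι : SupBotHom L (Ideal S))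
    (hι : ∀ x y, ι x ≤ ι y → x ≤ y) (g : L → S) (hg : ∀ x, g x ∈ ι x) :
    ∃ w : L → S, (∀ p, w p ∈ ι p) ∧ (∀ p y, w p ∈ ι y → p ≤ y) ∧
      ∀ x, g x ≤ (supIrredBelow x).sup w := by
  classical
  have separate : ∀ p y, ∃ a ∈ ι p, a ∈ ι y → p ≤ y := by
    intro p y
    by_cases hpy : p ≤ y
    · exact ⟨⊥, Ideal.bot_mem _, fun _ => hpy⟩
    · obtain ⟨a, hap, hay⟩ := SetLike.not_le_iff_exists.1 (mt (hι p y) hpy)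
      exact ⟨a, hap, fun h => absurd h hay⟩
  have decompose : ∀ x, ∃ u : L → S, (∀ p, u p ∈ ι p) ∧ g x ≤ (supIrredBelow x).sup u := by
    intro x
    have hgx : g x ∈ ι ((supIrredBelow x).sup id) := by rw [sup_supIrredBelow]; exact hg x
    rw [map_finset_sup] at hgx
    exact Ideal.exists_le_finsetSup_of_mem_finsetSup hgx
  choose q hq_mem hq_sep using separate
  choose u hu_mem hu_le using decompose
  -- `w p` joins a witness of `ι p ⊄ ι y` for every `y` and the `p`-piece of every `g x`
  refine ⟨fun p => univ.sup (q p) ⊔ univ.sup fun x => u x p, fun p => ?_, fun p y h => ?_,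
    fun x => ?_⟩
  · exact Ideal.sup_mem ((Ideal.finsetSup_mem_iff _).2 fun y _ => hq_mem p y)
      ((Ideal.finsetSup_mem_iff _).2 fun x _ => hu_mem x p)
  · exact hq_sep p y (Ideal.lower _ (le_sup_of_le_left (le_sup (mem_univ y))) h)
  · exact (hu_le x).trans (sup_mono_fun fun p _ =>
      le_sup_of_le_right (le_sup (f := fun x => u x p) (mem_univ x)))

theorem exists_supBotHom_mem_of_le_reflecting [DistribLattice L] [OrderBot L]
    (ι : SupBotHom L (Ideal S)) (hι : ∀ x y, ι x ≤ ι y → x ≤ y) (g : L → S)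
    (hg : ∀ x, g x ∈ ι x) :
    ∃ e : SupBotHom L S, (∀ x, e x ∈ ι x) ∧ (∀ x, g x ≤ e x) ∧ ∀ x y, e x ≤ e y → x ≤ y := by
  classical
  obtain ⟨w, hw_mem, hw_sep, hw_le⟩ := exists_supIrred_weights ι hι g hg
  let e : SupBotHom L S :=
    { toFun := fun x => (supIrredBelow x).sup w
      map_sup' := fun x y => by simp only [supIrredBelow_sup, sup_union]
      map_bot' := by simp only [supIrredBelow_bot, sup_empty] }
  have he_mem : ∀ x, e x ∈ ι x := fun x => (Ideal.finsetSup_mem_iff _).2 fun p hp =>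
    OrderHomClass.mono ι (mem_supIrredBelow.1 hp).2 (hw_mem p)
  refine ⟨e, he_mem, hw_le, fun x y hxy => ?_⟩
  rw [← sup_supIrredBelow x]
  exact Finset.sup_le fun p hp => hw_sep p y (Ideal.lower _ ((le_sup hp).trans hxy) (he_mem y))

end Extension

theorem SupHom.map_eq_sup_map_inf {L S : Type*} [DistribLattice L] [SemilatticeSup S]
    (e : SupHom L S) (he : ∀ x y, e x ≤ e y → x ≤ y) {a b c : L} (h : e c ≤ e a ⊔ e b) :
    e c = e (c ⊓ a) ⊔ e (c ⊓ b) := by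
  rw [← map_sup, ← inf_sup_left, inf_eq_left.2 (he c _ (by rwa [map_sup]))]

/-- Ershov–Pudlák. Every distributive join-semilattice with zero is the
directed union of its finite distributive `⟨∨,0⟩`-subsemilattices: every finite subset `F`
is contained in a finite `T ⊆ S` containing `⊥`, closed under `⊔`, and distributive as a
join-semilattice in the induced order. -/
theorem stmt4 (S : Type*) [SemilatticeSup S] [OrderBot S]
    (hdist : ∀ a b c : S, c ≤ a ⊔ b → ∃ x y : S, x ≤ a ∧ y ≤ b ∧ c = x ⊔ y)
    (F : Finset S) :
    ∃ T : Finset S, F ⊆ T ∧ (⊥ : S) ∈ T ∧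
      (∀ x ∈ T, ∀ y ∈ T, x ⊔ y ∈ T) ∧
      (∀ a ∈ T, ∀ b ∈ T, ∀ c ∈ T, c ≤ a ⊔ b →
        ∃ x ∈ T, ∃ y ∈ T, x ≤ a ∧ y ≤ b ∧ c = x ⊔ y) := by
  classical
  let _ := Ideal.distribLattice hdist
  obtain ⟨L, hfin, hF, hbot⟩ := Sublattice.exists_finite_superset (F.image Ideal.principal)
  let _ : Fintype L := hfin.fintype
  let _ : OrderBot L := Subtype.orderBot hbot
  have generator :
      ∀ x : L, ∃ a ∈ (x : Ideal S), ∀ s, (x : Ideal S) = Ideal.principal s → s ≤ a := by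
    intro x
    by_cases hx : ∃ s, (x : Ideal S) = Ideal.principal s
    · obtain ⟨s, hs⟩ := hx
      exact ⟨s, hs ▸ Ideal.mem_principal_self,
        fun t ht => Ideal.principal_le_iff.1 (ht.symm.trans hs).le⟩
    · exact ⟨⊥, Ideal.bot_mem _, fun s hs => absurd ⟨s, hs⟩ hx⟩
  choose g hg_mem hg_le using generator
  obtain ⟨e, he_mem, he_le, he_refl⟩ :=
    exists_supBotHom_mem_of_le_reflecting ⟨⟨(↑), fun _ _ => rfl⟩, rfl⟩ (fun _ _ => id) g hg_mem
  refine ⟨univ.image e, fun s hs => ?_, mem_image.2 ⟨⊥, mem_univ _, map_bot e⟩, ?_, ?_⟩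
  · have hsL : Ideal.principal s ∈ L := hF (mem_image_of_mem _ hs)
    exact mem_image.2 ⟨⟨_, hsL⟩, mem_univ _,
      le_antisymm (Ideal.mem_principal.1 (he_mem ⟨_, hsL⟩)) ((hg_le _ s rfl).trans (he_le _))⟩
  · simp only [mem_image, mem_univ, true_and]
    rintro _ ⟨x, rfl⟩ _ ⟨y, rfl⟩
    exact ⟨x ⊔ y, map_sup e x y⟩
  · simp only [mem_image, mem_univ, true_and]
    rintro _ ⟨a, rfl⟩ _ ⟨b, rfl⟩ _ ⟨c, rfl⟩ h
    exact ⟨_, ⟨c ⊓ a, rfl⟩, _, ⟨c ⊓ b, rfl⟩, OrderHomClass.mono e inf_le_right,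
      OrderHomClass.mono e inf_le_right, SupHom.map_eq_sup_map_inf e.toSupHom he_refl h⟩
end

section
/- Let Q be a poset and P a subset of Q with the induced order such that Q is an interval extension of P. Let x ∈ P and y, z ∈ Q. (a) If x ≤ z, y ≤ z, and x ≰ y, then y^P ≤ z. (b) Dually, if z ≤ x, z ≤ y, and y ≰ x, then z ≤ y_P. -/
/-- Let the ambient poset `Q` (the type `α`) be an interval extension of
`P`, with `lo x = x_P` and `up x = x^P`. For `x ∈ P` and `y, z ∈ Q`:
(a) if `x ≤ z`, `y ≤ z` and `x ≰ y`, then `y^P ≤ z`;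
(b) dually, if `z ≤ x`, `z ≤ y` and `y ≰ x`, then `z ≤ lo y`. -/
theorem stmt7 {α : Type*} [PartialOrder α] (P : Set α) (lo up : α → α)
    (hlo : ∀ x : α, IsGreatest {p | p ∈ P ∧ p ≤ x} (lo x))
    (hup : ∀ x : α, IsLeast {p | p ∈ P ∧ x ≤ p} (up x))
    (hint : ∀ x y : α, x ≤ y → up x ≤ lo y ∨ (lo x = lo y ∧ up x = up y))
    (x : α) (hx : x ∈ P) (y z : α) :
    (x ≤ z → y ≤ z → ¬ x ≤ y → up y ≤ z) ∧
    (z ≤ x → z ≤ y → ¬ y ≤ x → z ≤ lo y) := by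
  constructor
  · intro hxz hyz hxy
    rcases hint y z hyz with h | ⟨h1, _⟩
    · exact h.trans (hlo z).1.2
    · exact absurd (((hlo z).2 ⟨hx, hxz⟩).trans (h1 ▸ (hlo y).1.2)) hxy
  · intro hzx hzy hyx
    rcases hint z y hzy with h | ⟨h1, h2⟩
    · exact ((hup z).1.2).trans h
    · exact absurd ((hup y).1.2.trans (h2 ▸ (hup z).2 ⟨hx, hzx⟩)) hyx
end

section
/- Let P be a poset, let I be a set of pairs (a,b) ∈ P × P with a < b, and for each (a,b) ∈ I let Q_{a,b} be a poset. Form the disjoint union Q of P and of all the Q_{a,b} for (a,b) ∈ I. For x ∈ Q, set x_P = x^P = x if x comes from P, and x_P = a, x^P = b if x comes from Q_{a,b}. Define a binary relation ≤ on Q by: x ≤ y iff either x^P ≤ y_P holds in P, or x and y come from the same Q_{a,b} and x ≤ y holds in Q_{a,b}. Then ≤ is a partial ordering on Q whose restrictions to (the copies of) P and of each Q_{a,b} are the original orders, and Q is an interval extension of (the copy of) P; moreover, for every x ∈ Q, x_P is the greatest element of P below x in Q and x^P is the least element of P above x in Q. -/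
namespace Stmt10

variable {P : Type*} [PartialOrder P] (I : Set (P × P)) (R : P × P → Type*)
  [∀ p, PartialOrder (R p)]

/-- The lower endpoint `x_P` attached to an element of the disjoint union
`P ⊕ Σ (a,b) ∈ I, Q_{a,b}`. -/
def loMap : (P ⊕ (Σ p : I, R p.val)) → P
  | Sum.inl x => x
  | Sum.inr q => q.1.val.1

/-- The upper endpoint `x^P` attached to an element of the disjoint union. -/
def upMap : (P ⊕ (Σ p : I, R p.val)) → P
  | Sum.inl x => x
  | Sum.inr q => q.1.val.2

/-- The ordering on the disjoint union: `x ≤ y` iff `x^P ≤ y_P` in `P`, or `x, y` come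
from the same `Q_{a,b}` and `x ≤ y` there. -/
def sLE (x y : P ⊕ (Σ p : I, R p.val)) : Prop :=
  upMap I R x ≤ loMap I R y ∨
    ∃ (p : I) (s t : R p.val), s ≤ t ∧ x = Sum.inr ⟨p, s⟩ ∧ y = Sum.inr ⟨p, t⟩

/-- For a standard interval scheme (`P` a poset, `I` a set of pairs
`a < b`, and posets `Q_{a,b}`), the relation `sLE` is a partial order on the disjoint
union `Q` restricting to the original orders on `P` and on each `Q_{a,b}`, `Q` is an
interval extension of the copy of `P`, and `x_P` (resp. `x^P`) is the greatest (resp.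
least) element of the copy of `P` below (resp. above) `x`. -/
theorem stmt10 (hI : ∀ p ∈ I, p.1 < p.2) :
    (∀ x, sLE I R x x) ∧
    (∀ x y, sLE I R x y → sLE I R y x → x = y) ∧
    (∀ x y z, sLE I R x y → sLE I R y z → sLE I R x z) ∧
    (∀ a b : P, sLE I R (Sum.inl a) (Sum.inl b) ↔ a ≤ b) ∧
    (∀ (p : I) (s t : R p.val),
      sLE I R (Sum.inr ⟨p, s⟩) (Sum.inr ⟨p, t⟩) ↔ s ≤ t) ∧
    (∀ x, sLE I R (Sum.inl (loMap I R x)) x ∧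
      ∀ a : P, sLE I R (Sum.inl a) x → a ≤ loMap I R x) ∧
    (∀ x, sLE I R x (Sum.inl (upMap I R x)) ∧
      ∀ a : P, sLE I R x (Sum.inl a) → upMap I R x ≤ a) ∧
    (∀ x y, sLE I R x y → upMap I R x ≤ loMap I R y ∨
      (loMap I R x = loMap I R y ∧ upMap I R x = upMap I R y)) := by
  have lo_le_up : ∀ x, loMap I R x ≤ upMap I R x := by
    rintro (a | ⟨p, s⟩)
    · exact le_refl _
    · exact (hI p.val p.property).le
  have lo_lt_up : ∀ (p : I), (p.val.1 : P) < p.val.2 := fun p => hI p.val p.property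
  -- extract component equality
  have comp : ∀ (p q : I) (s : R p.val) (t : R q.val),
      (Sum.inr ⟨p, s⟩ : P ⊕ (Σ p : I, R p.val)) = Sum.inr ⟨q, t⟩ →
      ∃ h : p = q, h ▸ s = t := by
    intro p q s t h
    injection h with h
    obtain ⟨rfl, hs⟩ := Sigma.mk.inj_iff.mp h
    exact ⟨rfl, eq_of_heq hs⟩
  have refl : ∀ x, sLE I R x x := by
    rintro (a | ⟨p, s⟩)
    · exact Or.inl (le_refl a)
    · exact Or.inr ⟨p, s, s, le_refl s, rfl, rfl⟩
  have antisymm : ∀ x y, sLE I R x y → sLE I R y x → x = y := by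
    intro x y hxy hyx
    rcases hxy with h1 | ⟨p, s, t, hst, rfl, rfl⟩
    · rcases hyx with h2 | ⟨p, s, t, hst, rfl, rfl⟩
      · -- both "P-route"
        match x, y with
        | Sum.inl a, Sum.inl b => exact congrArg Sum.inl (le_antisymm h1 h2)
        | Sum.inl a, Sum.inr ⟨q, t⟩ =>
          exact absurd (h2.trans h1) (not_le_of_gt (lo_lt_up q))
        | Sum.inr ⟨q, t⟩, y =>
          exact absurd ((lo_lt_up q).trans_le (h1.trans ((lo_le_up y).trans h2)))
            (lt_irrefl _)
      · -- x,y same comp, P-route y ≤ x : p.2 ≤ p.1 contradiction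
        exact absurd h1 (not_le_of_gt (lo_lt_up p))
    · rcases hyx with h2 | ⟨q, u, v, huv, hy, hx⟩
      · exact absurd h2 (not_le_of_gt (lo_lt_up p))
      · obtain ⟨rfl, rfl⟩ := comp _ _ _ _ hy
        obtain ⟨_, rfl⟩ := comp _ _ _ _ hx
        exact congrArg Sum.inr (congrArg _ (le_antisymm hst huv))
  have trans : ∀ x y z, sLE I R x y → sLE I R y z → sLE I R x z := by
    intro x y z hxy hyz
    rcases hxy with h1 | ⟨p, s, t, hst, rfl, rfl⟩
    · rcases hyz with h2 | ⟨q, u, v, huv, rfl, rfl⟩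
      · exact Or.inl (h1.trans ((lo_le_up y).trans h2))
      · exact Or.inl h1
    · rcases hyz with h2 | ⟨q, u, v, huv, hy, rfl⟩
      · exact Or.inl h2
      · obtain ⟨rfl, rfl⟩ := comp _ _ _ _ hy
        exact Or.inr ⟨p, s, v, hst.trans huv, rfl, rfl⟩
  refine ⟨refl, antisymm, trans, ?_, ?_, ?_, ?_, ?_⟩
  · intro a b
    constructor
    · rintro (h | ⟨p, s, t, hst, h1, h2⟩)
      · exact h
      · exact absurd h1 (by simp)
    · exact fun h => Or.inl h
  · intro p s t
    constructor
    · rintro (h | ⟨q, u, v, huv, h1, h2⟩)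
      · exact absurd h (not_le_of_gt (lo_lt_up p))
      · obtain ⟨rfl, rfl⟩ := comp _ _ _ _ h1
        obtain ⟨_, rfl⟩ := comp _ _ _ _ h2
        exact huv
    · exact fun h => Or.inr ⟨p, s, t, h, rfl, rfl⟩
  · intro x
    refine ⟨?_, ?_⟩
    · rcases x with a | ⟨p, s⟩
      · exact Or.inl (le_refl a)
      · exact Or.inl (le_refl _)
    · intro a ha
      rcases ha with h | ⟨p, s, t, hst, h1, h2⟩
      · exact h
      · exact absurd h1 (by simp)
  · intro x
    refine ⟨?_, ?_⟩
    · rcases x with a | ⟨p, s⟩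
      · exact Or.inl (le_refl a)
      · exact Or.inl (le_refl _)
    · intro a ha
      rcases ha with h | ⟨p, s, t, hst, h1, h2⟩
      · exact h
      · exact absurd h2 (by simp)
  · intro x y hxy
    rcases hxy with h | ⟨p, s, t, hst, rfl, rfl⟩
    · exact Or.inl h
    · exact Or.inr ⟨rfl, rfl⟩


end Stmt10
end

section
/- Let R be a poset and let P ⊆ Q ⊆ R be subsets, each with the induced order. Assume that Q is an interval extension of P, that R is an interval extension of Q, and that there are no x ∈ P and y ∈ R with y_Q < x < y^Q. Then R is an interval extension of P. -/
/-- `Q` is a relatively complete extension of `P` (both subsets of the ambient poset,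
with the induced order). -/
def RCExt {α : Type*} [PartialOrder α] (P Q : Set α) : Prop :=
  ∀ x ∈ Q, (∃ a, IsGreatest {p | p ∈ P ∧ p ≤ x} a) ∧
    (∃ b, IsLeast {p | p ∈ P ∧ x ≤ p} b)

/-- `Q` is an interval extension of `P`. -/
def IntExt {α : Type*} [PartialOrder α] (P Q : Set α) : Prop :=
  RCExt P Q ∧
  ∀ x ∈ Q, ∀ y ∈ Q, x ≤ y →
    ∀ a₁ b₁ a₂ b₂ : α,
      IsGreatest {p | p ∈ P ∧ p ≤ x} a₁ → IsLeast {p | p ∈ P ∧ x ≤ p} b₁ →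
      IsGreatest {p | p ∈ P ∧ p ≤ y} a₂ → IsLeast {p | p ∈ P ∧ y ≤ p} b₂ →
      b₁ ≤ a₂ ∨ (a₁ = a₂ ∧ b₁ = b₂)

private lemma transG {α : Type*} [PartialOrder α] {P Q : Set α} (hPQ : P ⊆ Q) {x a c : α}
    (ha : IsGreatest {q | q ∈ Q ∧ q ≤ x} a) (hc : IsGreatest {p | p ∈ P ∧ p ≤ a} c) :
    IsGreatest {p | p ∈ P ∧ p ≤ x} c :=
  ⟨⟨hc.1.1, hc.1.2.trans ha.1.2⟩, fun p hp => hc.2 ⟨hp.1, ha.2 ⟨hPQ hp.1, hp.2⟩⟩⟩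

private lemma transL {α : Type*} [PartialOrder α] {P Q : Set α} (hPQ : P ⊆ Q) {x b d : α}
    (hb : IsLeast {q | q ∈ Q ∧ x ≤ q} b) (hd : IsLeast {p | p ∈ P ∧ b ≤ p} d) :
    IsLeast {p | p ∈ P ∧ x ≤ p} d :=
  ⟨⟨hd.1.1, hb.1.2.trans hd.1.2⟩, fun p hp => hd.2 ⟨hp.1, hb.2 ⟨hPQ hp.1, hp.2⟩⟩⟩

/-- If `Q` is an interval extension of `P`, the ambient poset `R`
(`Set.univ`) is an interval extension of `Q`, and no `x ∈ P` lies strictly between `y_Q`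
and `y^Q` for some `y ∈ R`, then `R` is an interval extension of `P`. -/
theorem stmt11 {α : Type*} [PartialOrder α] (P Q : Set α) (hPQ : P ⊆ Q)
    (h1 : IntExt P Q) (h2 : IntExt Q Set.univ)
    (hbetween : ∀ y a b : α, IsGreatest {q | q ∈ Q ∧ q ≤ y} a →
      IsLeast {q | q ∈ Q ∧ y ≤ q} b → ∀ x ∈ P, a < x → x < b → False) :
    IntExt P Set.univ := by
  constructor
  · intro x _
    obtain ⟨⟨a, ha⟩, ⟨b, hb⟩⟩ := h2.1 x trivial
    obtain ⟨⟨c, hc⟩, -⟩ := h1.1 a ha.1.1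
    obtain ⟨-, ⟨d, hd⟩⟩ := h1.1 b hb.1.1
    exact ⟨⟨c, transG hPQ ha hc⟩, ⟨d, transL hPQ hb hd⟩⟩
  · intro x _ y _ hxy a₁ b₁ a₂ b₂ ha₁ hb₁ ha₂ hb₂
    obtain ⟨⟨xl, hxl⟩, ⟨xu, hxu⟩⟩ := h2.1 x trivial
    obtain ⟨⟨yl, hyl⟩, ⟨yu, hyu⟩⟩ := h2.1 y trivial
    -- `a₁ ≤ a₂` and `b₁ ≤ b₂` always
    have ha12 : a₁ ≤ a₂ := ha₂.2 ⟨ha₁.1.1, ha₁.1.2.trans hxy⟩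
    have hb12 : b₁ ≤ b₂ := hb₁.2 ⟨hb₂.1.1, hxy.trans hb₂.1.2⟩
    rcases h2.2 x trivial y trivial hxy xl xu yl yu hxl hxu hyl hyu with
      hQ | ⟨hxyl, hxyu⟩
    · -- xu ≤ yl
      obtain ⟨⟨c, hc⟩, ⟨d, hd⟩⟩ := h1.1 xu hxu.1.1
      obtain ⟨⟨c', hc'⟩, ⟨d', hd'⟩⟩ := h1.1 yl hyl.1.1
      have hb₁d : b₁ = d := hb₁.unique (transL hPQ hxu hd)
      have ha₂c' : a₂ = c' := ha₂.unique (transG hPQ hyl hc')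
      rcases h1.2 xu hxu.1.1 yl hyl.1.1 hQ c d c' d' hc hd hc' hd' with
        hdc | ⟨hcc, hdd⟩
      · exact Or.inl (hb₁d ▸ ha₂c' ▸ hdc)
      · by_cases hdc' : d ≤ c'
        · exact Or.inl (hb₁d ▸ ha₂c' ▸ hdc')
        right
        -- Now c = c', d = d', ¬ d ≤ c'.
        -- Step 1: a₂ ≤ a₁, via showing c ≤ x.
        have hclex : c ≤ x := by
          obtain ⟨⟨e, he⟩, ⟨f, hf⟩⟩ := h1.1 xl hxl.1.1
          have hxlxu : xl ≤ xu := hxl.1.2.trans hxu.1.2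
          rcases h1.2 xl hxl.1.1 xu hxu.1.1 hxlxu e f c d he hf hc hd with
            hfc | ⟨hec, hfd⟩
          · by_cases hcx : c ≤ x
            · exact hcx
            exfalso
            have hxlc : xl ≤ c := hf.1.2.trans hfc
            have hxlc' : xl < c := lt_of_le_of_ne hxlc (by
              rintro rfl; exact hcx hxl.1.2)
            have hcxu : c < xu := lt_of_le_of_ne hc.1.2 (by
              rintro rfl
              exact hdc' (hcc ▸ hd.2 ⟨hc.1.1, le_refl _⟩))
            exact hbetween x xl xu hxl hxu c hc.1.1 hxlc' hcxu
          · exact (hec ▸ he.1.2).trans hxl.1.2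
        have ha21 : a₂ ≤ a₁ := ha₂c' ▸ hcc ▸ ha₁.2 ⟨hc.1.1, hclex⟩
        -- Step 2: b₂ ≤ b₁, via showing y ≤ d.
        have hyled : y ≤ d := by
          obtain ⟨⟨g, hg⟩, ⟨k, hk⟩⟩ := h1.1 yu hyu.1.1
          have hylyu : yl ≤ yu := hyl.1.2.trans hyu.1.2
          rcases h1.2 yl hyl.1.1 yu hyu.1.1 hylyu c' d' g k hc' hd' hg hk with
            hd'g | ⟨hc'g, hd'k⟩
          · by_cases hyd : y ≤ d
            · exact hyd
            exfalso
            have hdyu : d ≤ yu := hdd ▸ hd'g.trans hg.1.2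
            have hdyu' : d < yu := lt_of_le_of_ne hdyu (by
              rintro rfl; exact hyd hyu.1.2)
            have hyld : yl < d := lt_of_le_of_ne (hdd ▸ hd'.1.2) (by
              intro h
              exact hdc' (hcc ▸ hc'.2 ⟨hd.1.1, h.ge⟩))
            exact hbetween y yl yu hyl hyu d hd.1.1 hyld hdyu'
          · -- d = d' = k = yu^P ≥ y
            have hyk : y ≤ k := (transL hPQ hyu hk).1.2
            rw [hdd, hd'k]; exact hyk
        have hb21 : b₂ ≤ b₁ := hb₁d ▸ hb₂.2 ⟨hd.1.1, hyled⟩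
        exact ⟨le_antisymm ha12 ha21, le_antisymm hb12 hb21⟩
    · -- xl = yl, xu = yu
      right
      have ha21 : a₂ ≤ a₁ := by
        have : a₂ ≤ yl := hyl.2 ⟨hPQ ha₂.1.1, ha₂.1.2⟩
        exact ha₁.2 ⟨ha₂.1.1, (this.trans (hxyl ▸ hxl.1.2 : yl ≤ x))⟩
      have hb21 : b₂ ≤ b₁ := by
        have hyb₁ : yu ≤ b₁ := hxyu ▸ hxu.2 ⟨hPQ hb₁.1.1, hb₁.1.2⟩
        exact hb₂.2 ⟨hb₁.1.1, hyu.1.2.trans hyb₁⟩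
      exact ⟨le_antisymm ha12 ha21, le_antisymm hb12 hb21⟩
end

section
/- Let R be a poset and let P ⊆ Q ⊆ R be subsets, each with the induced order. If Q is an interval extension of P and R is a covering extension of Q, then R is an interval extension of P. -/
/-- `Q` is a covering extension of `P`: an interval extension in which `x_P` is equal to
or covered by `x^P` (within `P`) for every `x ∈ Q`. -/
def CovExt {α : Type*} [PartialOrder α] (P Q : Set α) : Prop :=
  IntExt P Q ∧
  ∀ x ∈ Q, ∀ a b : α,
    IsGreatest {p | p ∈ P ∧ p ≤ x} a → IsLeast {p | p ∈ P ∧ x ≤ p} b →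
    a = b ∨ (a < b ∧ ∀ p ∈ P, a < p → p < b → False)

/-- If `Q` is an interval extension of `P` and the ambient poset `R`
(`Set.univ`) is a covering extension of `Q`, then `R` is an interval extension of `P`. -/
theorem stmt12 {α : Type*} [PartialOrder α] (P Q : Set α) (hPQ : P ⊆ Q)
    (h1 : IntExt P Q) (h2 : CovExt Q Set.univ) :
    IntExt P Set.univ := by
  obtain ⟨hrcP, hintP⟩ := h1
  obtain ⟨⟨hrcQ, hintQ⟩, hcov⟩ := h2
  -- For any x, the greatest P-element below x is (x_Q)_P and least above is (x^Q)^P.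
  have key : ∀ x : α, ∃ u v a b,
      IsGreatest {q | q ∈ Q ∧ q ≤ x} u ∧ IsLeast {q | q ∈ Q ∧ x ≤ q} v ∧
      IsGreatest {p | p ∈ P ∧ p ≤ u} a ∧ IsLeast {p | p ∈ P ∧ v ≤ p} b ∧
      IsGreatest {p | p ∈ P ∧ p ≤ x} a ∧ IsLeast {p | p ∈ P ∧ x ≤ p} b := by
    intro x
    obtain ⟨⟨u, hu⟩, ⟨v, hv⟩⟩ := hrcQ x trivial
    obtain ⟨⟨a, ha⟩, -⟩ := hrcP u hu.1.1
    obtain ⟨-, ⟨b, hb⟩⟩ := hrcP v hv.1.1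
    refine ⟨u, v, a, b, hu, hv, ha, hb, ⟨⟨ha.1.1, ha.1.2.trans hu.1.2⟩, ?_⟩,
      ⟨⟨hb.1.1, hv.1.2.trans hb.1.2⟩, ?_⟩⟩
    · intro p hp
      exact ha.2 ⟨hp.1, hu.2 ⟨hPQ hp.1, hp.2⟩⟩
    · intro p hp
      exact hb.2 ⟨hp.1, hv.2 ⟨hPQ hp.1, hp.2⟩⟩
  constructor
  · intro x _
    obtain ⟨u, v, a, b, -, -, -, -, ha, hb⟩ := key x
    exact ⟨⟨a, ha⟩, ⟨b, hb⟩⟩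
  · intro x _ y _ hxy a₁ b₁ a₂ b₂ ha₁ hb₁ ha₂ hb₂
    obtain ⟨u, v, a, b, hu, hv, hau, hbv, hax, hbx⟩ := key x
    obtain ⟨u', v', a', b', hu', hv', hau', hbv', hay, hby⟩ := key y
    rw [ha₁.unique hax, hb₁.unique hbx, ha₂.unique hay, hb₂.unique hby]
    -- covering conditions at x and y: nothing of Q strictly between u and v (resp u', v')
    have covx : ∀ z ∈ Q, u ≤ z → z ≤ v → z = u ∨ z = v := by
      intro z hz h1z h2z
      rcases hcov x trivial u v hu hv with heq | ⟨-, hnone⟩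
      · exact Or.inl (le_antisymm (heq ▸ h2z) h1z)
      · rcases h1z.lt_or_eq with h | h
        · rcases h2z.lt_or_eq with h' | h'
          · exact absurd (hnone z hz h h') (fun f => f)
          · exact Or.inr h'
        · exact Or.inl h.symm
    have covy : ∀ z ∈ Q, u' ≤ z → z ≤ v' → z = u' ∨ z = v' := by
      intro z hz h1z h2z
      rcases hcov y trivial u' v' hu' hv' with heq | ⟨-, hnone⟩
      · exact Or.inl (le_antisymm (heq ▸ h2z) h1z)
      · rcases h1z.lt_or_eq with h | h
        · rcases h2z.lt_or_eq with h' | h'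
          · exact absurd (hnone z hz h h') (fun f => f)
          · exact Or.inr h'
        · exact Or.inl h.symm
    -- interval condition for Q inside univ on x ≤ y
    rcases hintQ x trivial y trivial hxy u v u' v' hu hv hu' hv' with hvu' | ⟨huu', hvv'⟩
    · -- case v ≤ u'
      obtain ⟨⟨vP, hvP⟩, -⟩ := hrcP v hv.1.1
      obtain ⟨-, ⟨u'up, hu'up⟩⟩ := hrcP u' hu'.1.1
      rcases hintP v hv.1.1 u' hu'.1.1 hvu' vP b a' u'up hvP hbv hau' hu'up with
        hba' | ⟨hS1, hS2⟩
      · exact Or.inl hba'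
      · -- case S : vP = a', b = u'up
        obtain ⟨-, ⟨uup, huup⟩⟩ := hrcP u hu.1.1
        obtain ⟨⟨v'P, hv'P⟩, -⟩ := hrcP v' hv'.1.1
        have huv : u ≤ v := hu.1.2.trans hv.1.2
        have hu'v' : u' ≤ v' := hu'.1.2.trans hv'.1.2
        have xside : b ≤ a' ∨ a = a' := by
          rcases hintP u hu.1.1 v hv.1.1 huv a uup vP b hau huup hvP hbv with
            hle | ⟨haeq, -⟩
          · rcases covx uup (hPQ huup.1.1) huup.1.2 (hle.trans hvP.1.2) with he | he
            · -- uup = u, so u ∈ P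
              have huP : u ∈ P := he ▸ huup.1.1
              rcases covx vP (hPQ hvP.1.1) (he ▸ hle) hvP.1.2 with hf | hf
              · -- vP = u, so a = u = vP = a'
                have hau2 : a = u := le_antisymm hau.1.2 (hau.2 ⟨huP, le_refl u⟩)
                exact Or.inr (hau2.trans (hf.symm.trans hS1))
              · -- vP = v, so v ∈ P and b ≤ v = vP = a'
                have hvPmem : v ∈ P := hf ▸ hvP.1.1
                have hbV : b ≤ v := hbv.2 ⟨hvPmem, le_refl v⟩
                exact Or.inl (hbV.trans (le_of_eq (hf.symm.trans hS1)))
            · -- uup = v, so v ∈ P; then vP = v and b ≤ v ≤ a'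
              have hvmem : v ∈ P := he ▸ huup.1.1
              have hvPeq : vP = v := le_antisymm hvP.1.2 (hvP.2 ⟨hvmem, le_refl v⟩)
              have hbV : b ≤ v := hbv.2 ⟨hvmem, le_refl v⟩
              exact Or.inl (hbV.trans (le_of_eq (hvPeq.symm.trans hS1)))
          · exact Or.inr (haeq.trans hS1)
        have yside : b ≤ a' ∨ b = b' := by
          rcases hintP u' hu'.1.1 v' hv'.1.1 hu'v' a' u'up v'P b' hau' hu'up hv'P hbv' with
            hle | ⟨-, hbeq⟩
          · rcases covy u'up (hPQ hu'up.1.1) hu'up.1.2 (hle.trans hv'P.1.2) with he | he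
            · -- u'up = u', so u' ∈ P; then b = u'up = u' ≤ a'
              have hu'P : u' ∈ P := he ▸ hu'up.1.1
              have : u' ≤ a' := hau'.2 ⟨hu'P, le_refl u'⟩
              exact Or.inl ((hS2.trans he).le.trans this)
            · -- u'up = v', so v'P = v' ∈ P, and b' = v' = u'up = b
              have h1 : v' ≤ v'P := he ▸ hle
              have hv'Peq : v'P = v' := le_antisymm hv'P.1.2 h1
              have hv'mem : v' ∈ P := hv'Peq ▸ hv'P.1.1
              have hb'le : b' ≤ v' := hbv'.2 ⟨hv'mem, le_refl v'⟩
              have hleb' : v' ≤ b' := hbv'.1.2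
              exact Or.inr (hS2.trans (he.trans (le_antisymm hleb' hb'le)))
          · exact Or.inr (hS2.trans hbeq)
        rcases xside with h | h
        · exact Or.inl h
        · rcases yside with h' | h'
          · exact Or.inl h'
          · exact Or.inr ⟨h, h'⟩
    · -- case u = u', v = v'
      subst huu'; subst hvv'
      exact Or.inr ⟨hau.unique hau', hbv.unique hbv'⟩
end

section
/- Let R be a poset and let P ⊆ Q ⊆ R be subsets, each with the induced order. If Q is a covering extension of P and R is a covering extension of Q, then R is a covering extension of P. -/
section Aux
variable {α : Type*} [PartialOrder α] {P Q : Set α}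

lemma greTrans (hPQ : P ⊆ Q) {x xq a : α}
    (hxq : IsGreatest {q | q ∈ Q ∧ q ≤ x} xq)
    (ha : IsGreatest {p | p ∈ P ∧ p ≤ xq} a) :
    IsGreatest {p | p ∈ P ∧ p ≤ x} a :=
  ⟨⟨ha.1.1, ha.1.2.trans hxq.1.2⟩, fun p hp => ha.2 ⟨hp.1, hxq.2 ⟨hPQ hp.1, hp.2⟩⟩⟩

lemma leaTrans (hPQ : P ⊆ Q) {x xq b : α}
    (hxq : IsLeast {q | q ∈ Q ∧ x ≤ q} xq)
    (hb : IsLeast {p | p ∈ P ∧ xq ≤ p} b) :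
    IsLeast {p | p ∈ P ∧ x ≤ p} b :=
  ⟨⟨hb.1.1, hxq.1.2.trans hb.1.2⟩, fun p hp => hb.2 ⟨hp.1, hxq.2 ⟨hPQ hp.1, hp.2⟩⟩⟩

lemma selfGre {q : α} (hq : q ∈ P) : IsGreatest {p | p ∈ P ∧ p ≤ q} q :=
  ⟨⟨hq, le_rfl⟩, fun _ hp => hp.2⟩

lemma selfLea {q : α} (hq : q ∈ P) : IsLeast {p | p ∈ P ∧ q ≤ p} q :=
  ⟨⟨hq, le_rfl⟩, fun _ hp => hp.2⟩

lemma btwCov {q1 q2 c : α} (hcov : ∀ p ∈ Q, q1 < p → p < q2 → False)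
    (hc : c ∈ Q) (h1 : q1 ≤ c) (h2 : c ≤ q2) : c = q1 ∨ c = q2 := by
  rcases eq_or_lt_of_le h1 with h | h
  · exact Or.inl h.symm
  rcases eq_or_lt_of_le h2 with h' | h'
  · exact Or.inr h'
  exact (hcov c hc h h').elim

/-- If `q2_P ≠ q2^P` then the greatest `P`-element below `q1 = x_Q` equals `q2_P`
(where `q2 = x^Q`). -/
lemma keyA (hPQ : P ⊆ Q) (h1 : CovExt P Q) (h2 : CovExt Q Set.univ)
    {x q1 q2 a1 m n : α}
    (hq1 : IsGreatest {q | q ∈ Q ∧ q ≤ x} q1) (hq2 : IsLeast {q | q ∈ Q ∧ x ≤ q} q2)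
    (ha1 : IsGreatest {p | p ∈ P ∧ p ≤ q1} a1)
    (hm : IsGreatest {p | p ∈ P ∧ p ≤ q2} m) (hn : IsLeast {p | p ∈ P ∧ q2 ≤ p} n)
    (hmn : m ≠ n) : a1 = m := by
  have hq12 : q1 ≤ q2 := hq1.1.2.trans hq2.1.2
  rcases h2.2 x (Set.mem_univ x) q1 q2 hq1 hq2 with heq | ⟨_, hcov⟩
  · subst heq
    exact ha1.unique hm
  · obtain ⟨_, b1, hb1⟩ := h1.1.1 q1 hq1.1.1
    rcases h1.1.2 q1 hq1.1.1 q2 hq2.1.1 hq12 a1 b1 m n ha1 hb1 hm hn with hle | ⟨h, _⟩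
    · -- b1 ≤ m
      have hq2P : q2 ∉ P := fun hq2P =>
        hmn ((hm.unique (selfGre hq2P)).trans (hn.unique (selfLea hq2P)).symm)
      rcases btwCov hcov (hPQ hb1.1.1) hb1.1.2 (hle.trans hm.1.2) with hc | hc
      · -- b1 = q1, so q1 ∈ P
        have hq1P : q1 ∈ P := hc ▸ hb1.1.1
        rcases btwCov hcov (hPQ hm.1.1) (hc ▸ hle) hm.1.2 with hm1 | hm2
        · exact (ha1.unique (selfGre hq1P)).trans hm1.symm
        · exact (hq2P (hm2 ▸ hm.1.1)).elim
      · exact (hq2P (hc ▸ hb1.1.1)).elim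
    · exact h

/-- Dual of `keyA`: if `q3_P ≠ q3^P` then the least `P`-element above `q4 = y^Q`
equals `q3^P` (where `q3 = y_Q`). -/
lemma keyB (hPQ : P ⊆ Q) (h1 : CovExt P Q) (h2 : CovExt Q Set.univ)
    {y q3 q4 b2 m n : α}
    (hq3 : IsGreatest {q | q ∈ Q ∧ q ≤ y} q3) (hq4 : IsLeast {q | q ∈ Q ∧ y ≤ q} q4)
    (hb2 : IsLeast {p | p ∈ P ∧ q4 ≤ p} b2)
    (hm : IsGreatest {p | p ∈ P ∧ p ≤ q3} m) (hn : IsLeast {p | p ∈ P ∧ q3 ≤ p} n)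
    (hmn : m ≠ n) : b2 = n := by
  have hq34 : q3 ≤ q4 := hq3.1.2.trans hq4.1.2
  rcases h2.2 y (Set.mem_univ y) q3 q4 hq3 hq4 with heq | ⟨_, hcov⟩
  · subst heq
    exact hb2.unique hn
  · obtain ⟨⟨a4, ha4⟩, _⟩ := h1.1.1 q4 hq4.1.1
    rcases h1.1.2 q3 hq3.1.1 q4 hq4.1.1 hq34 m n a4 b2 hm hn ha4 hb2 with hle | ⟨_, h⟩
    · -- n ≤ a4
      have hq3P : q3 ∉ P := fun hq3P =>
        hmn ((hm.unique (selfGre hq3P)).trans (hn.unique (selfLea hq3P)).symm)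
      rcases btwCov hcov (hPQ hn.1.1) hn.1.2 (hle.trans ha4.1.2) with hc | hc
      · exact (hq3P (hc ▸ hn.1.1)).elim
      · -- n = q4, so q4 ∈ P
        have hq4P : q4 ∈ P := hc ▸ hn.1.1
        exact (hb2.unique (selfLea hq4P)).trans hc.symm
    · exact h.symm

end Aux

/-- If `Q` is a covering extension of `P` and the ambient poset `R`
(`Set.univ`) is a covering extension of `Q`, then `R` is a covering extension of `P`. -/
theorem stmt13 {α : Type*} [PartialOrder α] (P Q : Set α) (hPQ : P ⊆ Q)
    (h1 : CovExt P Q) (h2 : CovExt Q Set.univ) :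
    CovExt P Set.univ := by
  refine ⟨⟨?_, ?_⟩, ?_⟩
  · -- RCExt
    intro x _
    obtain ⟨⟨q1, hq1⟩, q2, hq2⟩ := h2.1.1 x (Set.mem_univ x)
    obtain ⟨⟨a1, ha1⟩, _⟩ := h1.1.1 q1 hq1.1.1
    obtain ⟨_, b1, hb1⟩ := h1.1.1 q2 hq2.1.1
    exact ⟨⟨a1, greTrans hPQ hq1 ha1⟩, ⟨b1, leaTrans hPQ hq2 hb1⟩⟩
  · -- IntExt
    intro x _ y _ hxy a1 b1 a2 b2 ha1 hb1 ha2 hb2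
    obtain ⟨⟨q1, hq1⟩, q2, hq2⟩ := h2.1.1 x (Set.mem_univ x)
    obtain ⟨⟨q3, hq3⟩, q4, hq4⟩ := h2.1.1 y (Set.mem_univ y)
    obtain ⟨⟨A1, hA1⟩, _⟩ := h1.1.1 q1 hq1.1.1
    obtain ⟨⟨A2, hA2⟩, B2, hB2⟩ := h1.1.1 q2 hq2.1.1
    obtain ⟨⟨A3, hA3⟩, B3, hB3⟩ := h1.1.1 q3 hq3.1.1
    obtain ⟨_, B4, hB4⟩ := h1.1.1 q4 hq4.1.1
    have ea1 : a1 = A1 := ha1.unique (greTrans hPQ hq1 hA1)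
    have eb1 : b1 = B2 := hb1.unique (leaTrans hPQ hq2 hB2)
    have ea2 : a2 = A3 := ha2.unique (greTrans hPQ hq3 hA3)
    have eb2 : b2 = B4 := hb2.unique (leaTrans hPQ hq4 hB4)
    rcases h2.1.2 x (Set.mem_univ x) y (Set.mem_univ y) hxy q1 q2 q3 q4 hq1 hq2 hq3 hq4
      with hle | ⟨e13, e24⟩
    · -- q2 ≤ q3
      rcases h1.1.2 q2 hq2.1.1 q3 hq3.1.1 hle A2 B2 A3 B3 hA2 hB2 hA3 hB3
        with h | ⟨hA, hB⟩
      · exact Or.inl (eb1 ▸ ea2 ▸ h)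
      · -- A2 = A3 and B2 = B3
        by_cases hmn : A3 = B3
        · exact Or.inl (by rw [eb1, ea2, hB, ← hmn])
        · refine Or.inr ⟨?_, ?_⟩
          · have hmn' : A2 ≠ B2 := by rw [hA, hB]; exact hmn
            rw [ea1, ea2, ← hA]
            exact keyA hPQ h1 h2 hq1 hq2 hA1 hA2 hB2 hmn'
          · rw [eb1, eb2, hB]
            exact (keyB hPQ h1 h2 hq3 hq4 hB4 hA3 hB3 hmn).symm
    · -- q1 = q3, q2 = q4
      subst e13; subst e24
      exact Or.inr ⟨ea1.trans (ea2.trans (hA3.unique hA1)).symm,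
        eb1.trans (eb2.trans (hB4.unique hB2)).symm⟩
  · -- Covering
    intro x _ a b ha hb
    obtain ⟨⟨q1, hq1⟩, q2, hq2⟩ := h2.1.1 x (Set.mem_univ x)
    obtain ⟨⟨a1, hA1⟩, b1, hB1⟩ := h1.1.1 q1 hq1.1.1
    obtain ⟨⟨a2, hA2⟩, b2, hB2⟩ := h1.1.1 q2 hq2.1.1
    have ea : a = a1 := ha.unique (greTrans hPQ hq1 hA1)
    have eb : b = b2 := hb.unique (leaTrans hPQ hq2 hB2)
    rcases h2.2 x (Set.mem_univ x) q1 q2 hq1 hq2 with heq | ⟨hlt, hcov⟩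
    · -- q1 = q2, so x = q1 ∈ Q
      have hx : x = q1 := le_antisymm (heq ▸ hq2.1.2) hq1.1.2
      exact h1.2 x (hx ▸ hq1.1.1) a b ha hb
    · have hq12 : q1 ≤ q2 := hlt.le
      rcases h1.1.2 q1 hq1.1.1 q2 hq2.1.1 hq12 a1 b1 a2 b2 hA1 hB1 hA2 hB2
        with hcd | ⟨h13, h24⟩
      · -- b1 ≤ a2
        rcases btwCov hcov (hPQ hB1.1.1) hB1.1.2 (hcd.trans hA2.1.2) with hc | hc
        · -- b1 = q1, q1 ∈ P
          have hq1P : q1 ∈ P := hc ▸ hB1.1.1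
          have eaq1 : a1 = q1 := hA1.unique (selfGre hq1P)
          rcases btwCov hcov (hPQ hA2.1.1) (hc ▸ hcd) hA2.1.2 with hd | hd
          · -- a2 = q1 = a
            have : a = a2 := by rw [ea, eaq1, hd]
            rcases h1.2 q2 hq2.1.1 a2 b2 hA2 hB2 with h | ⟨h, h'⟩
            · exact Or.inl (this.trans (h.trans eb.symm))
            · exact Or.inr ⟨this ▸ eb ▸ h, fun p hp hap hpb =>
                h' p hp (this ▸ hap) (eb ▸ hpb)⟩
          · -- a2 = q2, so q2 ∈ P, b = q2, a = q1
            have hq2P : q2 ∈ P := hd ▸ hA2.1.1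
            have ebq2 : b = q2 := by rw [eb, hB2.unique (selfLea hq2P)]
            have eaq : a = q1 := ea.trans eaq1
            refine Or.inr ⟨by rw [eaq, ebq2]; exact hlt, fun p hp hap hpb =>
              hcov p (hPQ hp) (eaq ▸ hap) (ebq2 ▸ hpb)⟩
        · -- b1 = q2, q2 ∈ P, so b = b2 = q2 = b1
          have hq2P : q2 ∈ P := hc ▸ hB1.1.1
          have : b = b1 := by rw [eb, hB2.unique (selfLea hq2P), ← hc]
          rcases h1.2 q1 hq1.1.1 a1 b1 hA1 hB1 with h | ⟨h, h'⟩
          · exact Or.inl (ea.trans (h.trans this.symm))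
          · exact Or.inr ⟨ea ▸ this ▸ h, fun p hp hap hpb =>
              h' p hp (ea ▸ hap) (this ▸ hpb)⟩
      · -- a1 = a2, b1 = b2
        have : b = b1 := eb.trans h24.symm
        rcases h1.2 q1 hq1.1.1 a1 b1 hA1 hB1 with h | ⟨h, h'⟩
        · exact Or.inl (ea.trans (h.trans this.symm))
        · exact Or.inr ⟨ea ▸ this ▸ h, fun p hp hap hpb =>
            h' p hp (ea ▸ hap) (this ▸ hpb)⟩
end

section
/- Let Λ be a meet-semilattice and let (Q_i, ≤_i)_{i∈Λ} be a normal diagram of posets, with union P = ⋃_{i∈Λ} Q_i. Define a relation ≤ on P by: x ≤ y iff there exist i, j ∈ Λ and z ∈ Q_{i∧j} with x ∈ Q_i, y ∈ Q_j, x ≤_i z and z ≤_j y. Then for ALL i, j ∈ Λ with x ∈ Q_i and y ∈ Q_j, one has x ≤ y if and only if there exists z ∈ Q_{i∧j} with x ≤_i z and z ≤_j y. -/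
/-- For a normal diagram of posets `(Q i, le i)` indexed by a
meet-semilattice `Λ`, the strong amalgam relation is independent of the chosen indices:
for ALL `i, j` with `x ∈ Q i`, `y ∈ Q j`, one has `x ≤ y` (in the amalgam) iff there is
`z ∈ Q (i ⊓ j)` with `x ≤_i z` and `z ≤_j y`. -/
theorem stmt14 {Λ : Type*} [SemilatticeInf Λ] {X : Type*}
    (Q : Λ → Set X) (le : Λ → X → X → Prop)
    (hrefl : ∀ i, ∀ x ∈ Q i, le i x x)
    (hanti : ∀ i, ∀ x ∈ Q i, ∀ y ∈ Q i, le i x y → le i y x → x = y)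
    (htrans : ∀ i, ∀ x ∈ Q i, ∀ y ∈ Q i, ∀ z ∈ Q i, le i x y → le i y z → le i x z)
    (hsub : ∀ i j, i ≤ j → Q i ⊆ Q j)
    (hcompat : ∀ i j, i ≤ j → ∀ x ∈ Q i, ∀ y ∈ Q i, (le i x y ↔ le j x y))
    (hcap : ∀ i j, Q i ∩ Q j = Q (i ⊓ j))
    (hnorm : ∀ i j k, i ≤ k → j ≤ k → ∀ x ∈ Q i, ∀ y ∈ Q j, le k x y →
      ∃ z ∈ Q (i ⊓ j), le i x z ∧ le j z y) :
    ∀ i j, ∀ x ∈ Q i, ∀ y ∈ Q j,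
      ((∃ i' j', x ∈ Q i' ∧ y ∈ Q j' ∧ ∃ z ∈ Q (i' ⊓ j'), le i' x z ∧ le j' z y) ↔
        ∃ z ∈ Q (i ⊓ j), le i x z ∧ le j z y) := by
  intro i j x hxi y hyj
  constructor
  · rintro ⟨i', j', hxi', hyj', z, hz, hxz, hzy⟩
    have hx2 : x ∈ Q (i ⊓ i') := by rw [← hcap]; exact ⟨hxi, hxi'⟩
    have hy2 : y ∈ Q (j' ⊓ j) := by rw [← hcap]; exact ⟨hyj', hyj⟩
    obtain ⟨w, hw, hxw, hwz⟩ :=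
      hnorm (i ⊓ i') (i' ⊓ j') i' inf_le_right inf_le_left x hx2 z hz hxz
    obtain ⟨v, hv, hzv, hvy⟩ :=
      hnorm (i' ⊓ j') (j' ⊓ j) j' inf_le_right inf_le_left z hz y hy2 hzy
    have hwv : le (i' ⊓ j') w v :=
      htrans (i' ⊓ j') w (hsub _ _ inf_le_right hw) z hz v (hsub _ _ inf_le_left hv) hwz hzv
    obtain ⟨u, hu, hwu, huv⟩ :=
      hnorm ((i ⊓ i') ⊓ (i' ⊓ j')) ((i' ⊓ j') ⊓ (j' ⊓ j)) (i' ⊓ j')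
        inf_le_right inf_le_left w hw v hv hwv
    have hAi : (i ⊓ i') ⊓ (i' ⊓ j') ≤ i := inf_le_left.trans inf_le_left
    have hBj : (i' ⊓ j') ⊓ (j' ⊓ j) ≤ j := inf_le_right.trans inf_le_right
    have huij : u ∈ Q (i ⊓ j) :=
      hsub _ _ (le_inf (inf_le_left.trans hAi) (inf_le_right.trans hBj)) hu
    have hwi : w ∈ Q i := hsub _ _ hAi hw
    have hui : u ∈ Q i := hsub _ _ (inf_le_left.trans hAi) hu
    have hvj : v ∈ Q j := hsub _ _ hBj hv
    have huj : u ∈ Q j := hsub _ _ (inf_le_right.trans hBj) hu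
    have hxw : le i x w :=
      (hcompat (i ⊓ i') i inf_le_left x hx2 w (hsub _ _ inf_le_left hw)).mp hxw
    have hwu : le i w u :=
      (hcompat _ i hAi w hw u (hsub _ _ inf_le_left hu)).mp hwu
    have huv : le j u v :=
      (hcompat _ j hBj u (hsub _ _ inf_le_right hu) v hv).mp huv
    have hvy : le j v y :=
      (hcompat (j' ⊓ j) j inf_le_right v (hsub _ _ inf_le_right hv) y hy2).mp hvy
    exact ⟨u, huij, htrans i x hxi w hwi u hui hxw hwu,
      htrans j u huj v hvj y hyj huv hvy⟩
  · rintro ⟨z, hz, hxz, hzy⟩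
    exact ⟨i, j, hxi, hyj, z, hz, hxz, hzy⟩
end

section
/- Let Λ be a meet-semilattice and let (Q_i, ≤_i)_{i∈Λ} be a normal diagram of posets, with union P = ⋃_{i∈Λ} Q_i. Define a relation ≤ on P by: x ≤ y iff there exist i, j ∈ Λ and z ∈ Q_{i∧j} with x ∈ Q_i, y ∈ Q_j, x ≤_i z and z ≤_j y. Then ≤ is a partial ordering of P (reflexive, antisymmetric, transitive), and for every i ∈ Λ, the restriction of ≤ to Q_i coincides with ≤_i. -/
/-- For a normal diagram of posets `(Q i, le i)` indexed by a
meet-semilattice `Λ`, the strong amalgam relation is a partial order on the union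
`P = ⋃ i, Q i`, and its restriction to each `Q i` coincides with `le i`. -/
theorem stmt15 {Λ : Type*} [SemilatticeInf Λ] {X : Type*}
    (Q : Λ → Set X) (le : Λ → X → X → Prop)
    (hrefl : ∀ i, ∀ x ∈ Q i, le i x x)
    (hanti : ∀ i, ∀ x ∈ Q i, ∀ y ∈ Q i, le i x y → le i y x → x = y)
    (htrans : ∀ i, ∀ x ∈ Q i, ∀ y ∈ Q i, ∀ z ∈ Q i, le i x y → le i y z → le i x z)
    (hsub : ∀ i j, i ≤ j → Q i ⊆ Q j)
    (hcompat : ∀ i j, i ≤ j → ∀ x ∈ Q i, ∀ y ∈ Q i, (le i x y ↔ le j x y))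
    (hcap : ∀ i j, Q i ∩ Q j = Q (i ⊓ j))
    (hnorm : ∀ i j k, i ≤ k → j ≤ k → ∀ x ∈ Q i, ∀ y ∈ Q j, le k x y →
      ∃ z ∈ Q (i ⊓ j), le i x z ∧ le j z y)
    (sle : X → X → Prop)
    (hsle : ∀ x y, sle x y ↔ ∃ i j, x ∈ Q i ∧ y ∈ Q j ∧
      ∃ z ∈ Q (i ⊓ j), le i x z ∧ le j z y) :
    (∀ x : X, (∃ i, x ∈ Q i) → sle x x) ∧
    (∀ x y : X, sle x y → sle y x → x = y) ∧
    (∀ x y z : X, sle x y → sle y z → sle x z) ∧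
    (∀ i, ∀ x ∈ Q i, ∀ y ∈ Q i, (sle x y ↔ le i x y)) := by
  have hmem : ∀ {i j : Λ}, i ≤ j → ∀ {x}, x ∈ Q i → x ∈ Q j := by
    intro i j h x hx; exact hsub _ _ h hx
  have hup : ∀ {i j : Λ}, i ≤ j → ∀ {x y}, x ∈ Q i → y ∈ Q i → le i x y → le j x y := by
    intro i j h x y hx hy hxy; exact (hcompat _ _ h _ hx _ hy).mp hxy
  have hdown : ∀ {i j : Λ}, i ≤ j → ∀ {x y}, x ∈ Q i → y ∈ Q i → le j x y → le i x y := by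
    intro i j h x y hx hy hxy; exact (hcompat _ _ h _ hx _ hy).mpr hxy
  have hcapmem : ∀ {i j : Λ} {x}, x ∈ Q i → x ∈ Q j → x ∈ Q (i ⊓ j) := by
    intro i j x hx hy; rw [← hcap]; exact ⟨hx, hy⟩
  -- Key lemma: any pair of indices containing `x` and `y` witnesses `sle x y`.
  have B : ∀ x y, sle x y → ∀ a b, x ∈ Q a → y ∈ Q b →
      ∃ u ∈ Q (a ⊓ b), le a x u ∧ le b u y := by
    intro x y hxy a b hxa hyb
    obtain ⟨i, j, hxi, hyj, z, hz, hxz, hzy⟩ := (hsle x y).mp hxy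
    have hxia : x ∈ Q (i ⊓ a) := hcapmem hxi hxa
    have hyjb : y ∈ Q (j ⊓ b) := hcapmem hyj hyb
    obtain ⟨w, hw, hxw, hwz⟩ :=
      hnorm (i ⊓ a) (i ⊓ j) i inf_le_left inf_le_left x hxia z hz hxz
    obtain ⟨v, hv, hzv, hvy⟩ :=
      hnorm (i ⊓ j) (j ⊓ b) j inf_le_right inf_le_left z hz y hyjb hzy
    have hwij : w ∈ Q (i ⊓ j) := hmem inf_le_right hw
    have hvij : v ∈ Q (i ⊓ j) := hmem inf_le_left hv
    have hwv : le (i ⊓ j) w v := htrans _ _ hwij _ hz _ hvij hwz hzv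
    obtain ⟨u, hu, hwu, huv⟩ := hnorm ((i ⊓ a) ⊓ (i ⊓ j)) ((i ⊓ j) ⊓ (j ⊓ b)) (i ⊓ j)
      inf_le_right inf_le_left w hw v hv hwv
    have h1a : (i ⊓ a) ⊓ (i ⊓ j) ≤ a := inf_le_left.trans inf_le_right
    have h2b : (i ⊓ j) ⊓ (j ⊓ b) ≤ b := inf_le_right.trans inf_le_right
    have hab : ((i ⊓ a) ⊓ (i ⊓ j)) ⊓ ((i ⊓ j) ⊓ (j ⊓ b)) ≤ a ⊓ b :=
      le_inf (inf_le_left.trans h1a) (inf_le_right.trans h2b)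
    refine ⟨u, hmem hab hu, ?_, ?_⟩
    · have hxw' : le a x w := hup inf_le_right hxia (hmem inf_le_left hw) hxw
      have hwu' : le a w u := hup h1a hw (hmem inf_le_left hu) hwu
      exact htrans a x hxa w (hmem h1a hw) u (hmem (inf_le_left.trans h1a) hu) hxw' hwu'
    · have huv' : le b u v := hup h2b (hmem inf_le_right hu) hv huv
      have hvy' : le b v y := hup inf_le_right (hmem inf_le_right hv) hyjb hvy
      exact htrans b u (hmem (inf_le_right.trans h2b) hu) v (hmem h2b hv) y hyb huv' hvy'
  refine ⟨?_, ?_, ?_, ?_⟩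
  · rintro x ⟨i, hx⟩
    exact (hsle x x).mpr ⟨i, i, hx, hx, x, hcapmem hx hx, hrefl i x hx, hrefl i x hx⟩
  · intro x y h1 h2
    obtain ⟨a, j, hxa, hyj, -⟩ := (hsle x y).mp h1
    obtain ⟨i', b, hyi', hxb, -⟩ := (hsle y x).mp h2
    obtain ⟨z, hz, hxz, hzy⟩ := B x y h1 a j hxa hyj
    obtain ⟨z', hz', hyz', hz'x⟩ := B y x h2 j a hyj hxa
    have hz'aj : z' ∈ Q (a ⊓ j) := by rw [inf_comm a j]; exact hz'
    have hza : z ∈ Q a := hmem inf_le_left hz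
    have hzj : z ∈ Q j := hmem inf_le_right hz
    have hz'a : z' ∈ Q a := hmem inf_le_left hz'aj
    have hz'j : z' ∈ Q j := hmem inf_le_right hz'aj
    -- le j z z'
    have hzz' : le j z z' := htrans j z hzj y hyj z' hz'j hzy hyz'
    have hzz'a : le a z z' := hup inf_le_left hz hz'aj (hdown inf_le_right hz hz'aj hzz')
    have hxz' : le a x z' := htrans a x hxa z hza z' hz'a hxz hzz'a
    have hxeq : x = z' := hanti a x hxa z' hz'a hxz' hz'x
    subst hxeq
    -- now x = z', show x = y in Q j
    have hxz_j : le j x z := hup inf_le_right hz'aj hz (hdown inf_le_left hz'aj hz hxz)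
    have hxy_j : le j x y := htrans j x hz'j z hzj y hyj hxz_j hzy
    exact hanti j x hz'j y hyj hxy_j hyz'
  · intro x y z h1 h2
    obtain ⟨a, j, hxa, hyj, -⟩ := (hsle x y).mp h1
    obtain ⟨i', c, hyi', hzc, -⟩ := (hsle y z).mp h2
    have hym : y ∈ Q (j ⊓ i') := hcapmem hyj hyi'
    set m := j ⊓ i' with hm
    obtain ⟨w, hw, hxw, hwy⟩ := B x y h1 a m hxa hym
    obtain ⟨v, hv, hyv, hvz⟩ := B y z h2 m c hym hzc
    have hwv : le m w v :=
      htrans m w (hmem inf_le_right hw) y hym v (hmem inf_le_left hv) hwy hyv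
    obtain ⟨u, hu, hwu, huv⟩ :=
      hnorm (a ⊓ m) (m ⊓ c) m inf_le_right inf_le_left w hw v hv hwv
    have h1a : (a ⊓ m) ⊓ (m ⊓ c) ≤ a ⊓ m := inf_le_left
    have h2c : (a ⊓ m) ⊓ (m ⊓ c) ≤ m ⊓ c := inf_le_right
    have hac : (a ⊓ m) ⊓ (m ⊓ c) ≤ a ⊓ c :=
      le_inf (h1a.trans inf_le_left) (h2c.trans inf_le_right)
    refine (hsle x z).mpr ⟨a, c, hxa, hzc, u, hmem hac hu, ?_, ?_⟩
    · have hwu' : le a w u := hup (inf_le_left : a ⊓ m ≤ a) hw (hmem h1a hu) hwu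
      exact htrans a x hxa w (hmem inf_le_left hw) u
        (hmem (h1a.trans inf_le_left) hu) hxw hwu'
    · have huv' : le c u v := hup (inf_le_right : m ⊓ c ≤ c) (hmem h2c hu) hv huv
      exact htrans c u (hmem (h2c.trans inf_le_right) hu) v (hmem inf_le_right hv) z hzc
        huv' hvz
  · intro i x hx y hy
    constructor
    · intro h
      obtain ⟨u, hu, hxu, huy⟩ := B x y h i i hx hy
      have hui : u ∈ Q i := hmem inf_le_left hu
      exact htrans i x hx u hui y hy hxu huy
    · intro h
      exact (hsle x y).mpr ⟨i, i, hx, hy, y, hcapmem hy hy, h, hrefl i y hy⟩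
end

section
/- Let Λ be a meet-semilattice and let (Q_i, ≤_i)_{i∈Λ} be a normal diagram of posets, with strong amalgam P (a poset). (i) If Q_j is a relatively complete extension of Q_i for all i ≤ j in Λ, then P is a relatively complete extension of Q_i for every i ∈ Λ. (ii) If Q_j is an interval extension of Q_i for all i ≤ j in Λ, then P is an interval extension of Q_i for every i ∈ Λ. -/
/-- Let `(Q i, le i)` be a normal diagram of posets indexed by a
meet-semilattice `Λ`, with strong amalgam order `sle` on `P = ⋃ i, Q i`.
(i) If `Q j` is a relatively complete extension of `Q i` whenever `i ≤ j`, then `P` is a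
relatively complete extension of each `Q i`.
(ii) If `Q j` is an interval extension of `Q i` whenever `i ≤ j`, then `P` is an interval
extension of each `Q i`. -/
theorem stmt16 {Λ : Type*} [SemilatticeInf Λ] {X : Type*}
    (Q : Λ → Set X) (le : Λ → X → X → Prop)
    (hrefl : ∀ i, ∀ x ∈ Q i, le i x x)
    (hanti : ∀ i, ∀ x ∈ Q i, ∀ y ∈ Q i, le i x y → le i y x → x = y)
    (htrans : ∀ i, ∀ x ∈ Q i, ∀ y ∈ Q i, ∀ z ∈ Q i, le i x y → le i y z → le i x z)
    (hsub : ∀ i j, i ≤ j → Q i ⊆ Q j)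
    (hcompat : ∀ i j, i ≤ j → ∀ x ∈ Q i, ∀ y ∈ Q i, (le i x y ↔ le j x y))
    (hcap : ∀ i j, Q i ∩ Q j = Q (i ⊓ j))
    (hnorm : ∀ i j k, i ≤ k → j ≤ k → ∀ x ∈ Q i, ∀ y ∈ Q j, le k x y →
      ∃ z ∈ Q (i ⊓ j), le i x z ∧ le j z y)
    (sle : X → X → Prop)
    (hsle : ∀ x y, sle x y ↔ ∃ i j, x ∈ Q i ∧ y ∈ Q j ∧
      ∃ z ∈ Q (i ⊓ j), le i x z ∧ le j z y) :
    -- (i)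
    ((∀ i j, i ≤ j → ∀ x ∈ Q j,
        (∃ a, a ∈ Q i ∧ le j a x ∧ ∀ p ∈ Q i, le j p x → le j p a) ∧
        (∃ b, b ∈ Q i ∧ le j x b ∧ ∀ p ∈ Q i, le j x p → le j b p)) →
      ∀ i, ∀ x : X, (∃ j, x ∈ Q j) →
        (∃ a, a ∈ Q i ∧ sle a x ∧ ∀ p ∈ Q i, sle p x → sle p a) ∧
        (∃ b, b ∈ Q i ∧ sle x b ∧ ∀ p ∈ Q i, sle x p → sle b p)) ∧
    -- (ii)
    (((∀ i j, i ≤ j → ∀ x ∈ Q j,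
        (∃ a, a ∈ Q i ∧ le j a x ∧ ∀ p ∈ Q i, le j p x → le j p a) ∧
        (∃ b, b ∈ Q i ∧ le j x b ∧ ∀ p ∈ Q i, le j x p → le j b p)) ∧
      (∀ i j, i ≤ j → ∀ x ∈ Q j, ∀ y ∈ Q j, le j x y →
        ∀ a₁ b₁ a₂ b₂ : X,
          (a₁ ∈ Q i ∧ le j a₁ x ∧ ∀ p ∈ Q i, le j p x → le j p a₁) →
          (b₁ ∈ Q i ∧ le j x b₁ ∧ ∀ p ∈ Q i, le j x p → le j b₁ p) →
          (a₂ ∈ Q i ∧ le j a₂ y ∧ ∀ p ∈ Q i, le j p y → le j p a₂) →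
          (b₂ ∈ Q i ∧ le j y b₂ ∧ ∀ p ∈ Q i, le j y p → le j b₂ p) →
          le j b₁ a₂ ∨ (a₁ = a₂ ∧ b₁ = b₂))) →
      ∀ i,
        (∀ x : X, (∃ j, x ∈ Q j) →
          (∃ a, a ∈ Q i ∧ sle a x ∧ ∀ p ∈ Q i, sle p x → sle p a) ∧
          (∃ b, b ∈ Q i ∧ sle x b ∧ ∀ p ∈ Q i, sle x p → sle b p)) ∧
        (∀ x y : X, (∃ j, x ∈ Q j) → (∃ j, y ∈ Q j) → sle x y →
          ∀ a₁ b₁ a₂ b₂ : X,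
            (a₁ ∈ Q i ∧ sle a₁ x ∧ ∀ p ∈ Q i, sle p x → sle p a₁) →
            (b₁ ∈ Q i ∧ sle x b₁ ∧ ∀ p ∈ Q i, sle x p → sle b₁ p) →
            (a₂ ∈ Q i ∧ sle a₂ y ∧ ∀ p ∈ Q i, sle p y → sle p a₂) →
            (b₂ ∈ Q i ∧ sle y b₂ ∧ ∀ p ∈ Q i, sle y p → sle b₂ p) →
            sle b₁ a₂ ∨ (a₁ = a₂ ∧ b₁ = b₂))) := by
  
  -- helper: membership in intersection
  have memI : ∀ {i j : Λ} {x : X}, x ∈ Q i → x ∈ Q j → x ∈ Q (i ⊓ j) := by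
    intro i j x hi hj
    have := hcap i j
    rw [← this]; exact ⟨hi, hj⟩
  have mono : ∀ {i j : Λ} {x : X}, i ≤ j → x ∈ Q i → x ∈ Q j :=
    fun h hx => hsub _ _ h hx
  have up : ∀ {i j : Λ} {x y : X}, i ≤ j → x ∈ Q i → y ∈ Q i → le i x y → le j x y :=
    fun h hx hy hxy => (hcompat _ _ h _ hx _ hy).1 hxy
  have dn : ∀ {i j : Λ} {x y : X}, i ≤ j → x ∈ Q i → y ∈ Q i → le j x y → le i x y :=
    fun h hx hy hxy => (hcompat _ _ h _ hx _ hy).2 hxy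
  have sle_of : ∀ {i : Λ} {x y : X}, x ∈ Q i → y ∈ Q i → le i x y → sle x y := by
    intro i x y hx hy h
    exact (hsle x y).2 ⟨i, i, hx, hy, y, memI hy hy, h, hrefl i y hy⟩
  -- normalization of sle
  have sle_norm : ∀ {i j : Λ} {x y : X}, x ∈ Q i → y ∈ Q j → sle x y →
      ∃ u ∈ Q (i ⊓ j), le i x u ∧ le j u y := by
    intro i j x y hx hy h
    obtain ⟨i', j', hxi', hyj', z, hz, hxz, hzy⟩ := (hsle x y).1 h
    have hx2 : x ∈ Q (i ⊓ i') := memI hx hxi'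
    obtain ⟨w, hw, hxw, hwz⟩ :=
      hnorm (i ⊓ i') (i' ⊓ j') i' inf_le_right inf_le_left x hx2 z hz
        hxz
    have hwij' : w ∈ Q (i' ⊓ j') := mono inf_le_right hw
    have hwzj' : le j' w z := up inf_le_right hwij' hz hwz
    have hwy : le j' w y :=
      htrans j' w (mono inf_le_right hwij') z (mono inf_le_right hz) y hyj' hwzj' hzy
    have hy2 : y ∈ Q (j ⊓ j') := memI hy hyj'
    obtain ⟨u, hu, hwu, huy⟩ :=
      hnorm ((i ⊓ i') ⊓ (i' ⊓ j')) (j ⊓ j') j' (inf_le_right.trans inf_le_right)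
        inf_le_right w hw y hy2 hwy
    have hmle : ((i ⊓ i') ⊓ (i' ⊓ j')) ≤ i := inf_le_left.trans inf_le_left
    have huij : u ∈ Q (i ⊓ j) :=
      mono (le_inf (inf_le_left.trans hmle) (inf_le_right.trans inf_le_left)) hu
    have hwi : w ∈ Q i := mono hmle hw
    have hui : u ∈ Q i := mono inf_le_left huij
    have hxw_i : le i x w := up inf_le_left hx2 (mono inf_le_left hw) hxw
    have hwu_i : le i w u := up hmle hw (mono inf_le_left hu) hwu
    refine ⟨u, huij, htrans i x hx w hwi u hui hxw_i hwu_i, ?_⟩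
    exact up inf_le_left (mono inf_le_right hu) hy2 huy
  -- transitivity of sle
  have sle_trans : ∀ {i j k : Λ} {x y z : X}, x ∈ Q i → y ∈ Q j → z ∈ Q k →
      sle x y → sle y z → sle x z := by
    intro i j k x y z hx hy hz h1 h2
    obtain ⟨u, hu, hxu, huy⟩ := sle_norm hx hy h1
    obtain ⟨v, hv, hyv, hvz⟩ := sle_norm hy hz h2
    have huj : u ∈ Q j := mono inf_le_right hu
    have hvj : v ∈ Q j := mono inf_le_left hv
    have huv : le j u v := htrans j u huj y hy v hvj huy hyv
    obtain ⟨w, hw, huw, hwv⟩ :=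
      hnorm (i ⊓ j) (j ⊓ k) j inf_le_right inf_le_left u hu v hv huv
    have hwik : w ∈ Q (i ⊓ k) :=
      mono (le_inf (inf_le_left.trans inf_le_left) (inf_le_right.trans inf_le_right)) hw
    have hwi : w ∈ Q i := mono inf_le_left hwik
    have hwk : w ∈ Q k := mono inf_le_right hwik
    have hxw : le i x w :=
      htrans i x hx u (mono inf_le_left hu) w hwi
        hxu (up inf_le_left hu (mono inf_le_left hw) huw)
    have hwz : le k w z :=
      htrans k w hwk v (mono inf_le_right hv) z hz
        (up inf_le_right (mono inf_le_right hw) hv hwv) hvz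
    exact (hsle x z).2 ⟨i, k, hx, hz, w, hwik, hxw, hwz⟩
  -- antisymmetry of sle
  have sle_antisym : ∀ {i j : Λ} {x y : X}, x ∈ Q i → y ∈ Q j →
      sle x y → sle y x → x = y := by
    intro i j x y hx hy h1 h2
    obtain ⟨u, hu, hxu, huy⟩ := sle_norm hx hy h1
    obtain ⟨v, hv, hyv, hvx⟩ := sle_norm hy hx h2
    have hv' : v ∈ Q (i ⊓ j) := by rwa [inf_comm] at hv
    have hui : u ∈ Q i := mono inf_le_left hu
    have hvi : v ∈ Q i := mono inf_le_left hv'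
    have huj : u ∈ Q j := mono inf_le_right hu
    have hvj : v ∈ Q j := mono inf_le_right hv'
    have hvu : le i v u := htrans i v hvi x hx u hui hvx hxu
    have huv : le j u v := htrans j u huj y hy v hvj huy hyv
    have huv' : le (i ⊓ j) u v := dn inf_le_right hu hv' huv
    have hvu' : le (i ⊓ j) v u := dn inf_le_left hv' hu hvu
    have heq : u = v := hanti (i ⊓ j) u hu v hv' huv' hvu'
    subst heq
    have hxu_eq : x = u := hanti i x hx u hui hxu hvx
    have hyu_eq : y = u := hanti j y hy u huj hyv huy
    rw [hxu_eq, hyu_eq]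
  -- core lemma: a greatest le-cover in Q (i ⊓ j) is a greatest sle-cover in Q i
  have lower_max : ∀ {i j : Λ} {x a : X}, x ∈ Q j → a ∈ Q (i ⊓ j) → le j a x →
      (∀ p ∈ Q (i ⊓ j), le j p x → le j p a) → ∀ p ∈ Q i, sle p x → sle p a := by
    intro i j x a hx ha hax hmax p hp hpx
    obtain ⟨u, hu, hpu, hux⟩ := sle_norm hp hx hpx
    have hua : le j u a := hmax u hu hux
    have hua' : le i u a := up inf_le_left hu ha (dn inf_le_right hu ha hua)
    have hpa : le i p a :=
      htrans i p hp u (mono inf_le_left hu) a (mono inf_le_left ha) hpu hua'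
    exact sle_of hp (mono inf_le_left ha) hpa
  have upper_min : ∀ {i j : Λ} {x b : X}, x ∈ Q j → b ∈ Q (i ⊓ j) → le j x b →
      (∀ p ∈ Q (i ⊓ j), le j x p → le j b p) → ∀ p ∈ Q i, sle x p → sle b p := by
    intro i j x b hx hb hxb hmin p hp hxp
    obtain ⟨u, hu, hxu, hup⟩ := sle_norm hx hp hxp
    have hu' : u ∈ Q (i ⊓ j) := by rwa [inf_comm] at hu
    have hbu : le j b u := hmin u hu' hxu
    have hbu' : le i b u := up inf_le_left hb hu' (dn inf_le_right hb hu' hbu)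
    have hbp : le i b p :=
      htrans i b (mono inf_le_left hb) u (mono inf_le_left hu') p hp hbu' hup
    exact sle_of (mono inf_le_left hb) hp hbp
  -- uniqueness transfer
  have lower_eq : ∀ {i j : Λ} {x a a' : X}, x ∈ Q j →
      (a ∈ Q (i ⊓ j) ∧ le j a x ∧ ∀ p ∈ Q (i ⊓ j), le j p x → le j p a) →
      (a' ∈ Q i ∧ sle a' x ∧ ∀ p ∈ Q i, sle p x → sle p a') → a = a' := by
    intro i j x a a' hx ⟨haQ, hax, hamax⟩ ⟨ha'Q, ha'x, ha'max⟩
    have hai : a ∈ Q i := mono inf_le_left haQ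
    have s1 : sle a a' := ha'max a hai (sle_of (mono inf_le_right haQ) hx hax)
    have s2 : sle a' a := lower_max hx haQ hax hamax a' ha'Q ha'x
    exact sle_antisym hai ha'Q s1 s2
  have upper_eq : ∀ {i j : Λ} {x b b' : X}, x ∈ Q j →
      (b ∈ Q (i ⊓ j) ∧ le j x b ∧ ∀ p ∈ Q (i ⊓ j), le j x p → le j b p) →
      (b' ∈ Q i ∧ sle x b' ∧ ∀ p ∈ Q i, sle x p → sle b' p) → b = b' := by
    intro i j x b b' hx ⟨hbQ, hxb, hbmin⟩ ⟨hb'Q, hxb', hb'min⟩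
    have hbi : b ∈ Q i := mono inf_le_left hbQ
    have s1 : sle b' b := hb'min b hbi (sle_of hx (mono inf_le_right hbQ) hxb)
    have s2 : sle b b' := upper_min hx hbQ hxb hbmin b' hb'Q hxb'
    exact sle_antisym hbi hb'Q s2 s1
  -- part (i)
  have part1 : (∀ i j, i ≤ j → ∀ x ∈ Q j,
        (∃ a, a ∈ Q i ∧ le j a x ∧ ∀ p ∈ Q i, le j p x → le j p a) ∧
        (∃ b, b ∈ Q i ∧ le j x b ∧ ∀ p ∈ Q i, le j x p → le j b p)) →
      ∀ i, ∀ x : X, (∃ j, x ∈ Q j) →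
        (∃ a, a ∈ Q i ∧ sle a x ∧ ∀ p ∈ Q i, sle p x → sle p a) ∧
        (∃ b, b ∈ Q i ∧ sle x b ∧ ∀ p ∈ Q i, sle x p → sle b p) := by
    intro hrc i x hxmem
    obtain ⟨j, hxj⟩ := hxmem
    obtain ⟨⟨a, haQ, hax, hamax⟩, ⟨b, hbQ, hxb, hbmin⟩⟩ := hrc (i ⊓ j) j inf_le_right x hxj
    exact ⟨⟨a, mono inf_le_left haQ, sle_of (mono inf_le_right haQ) hxj hax,
            lower_max hxj haQ hax hamax⟩,
           ⟨b, mono inf_le_left hbQ, sle_of hxj (mono inf_le_right hbQ) hxb,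
            upper_min hxj hbQ hxb hbmin⟩⟩
  refine ⟨part1, ?_⟩
  rintro ⟨hrc, hint⟩ i
  refine ⟨part1 hrc i, ?_⟩
  rintro x y ⟨jx, hx⟩ ⟨jy, hy⟩ hxy a₁ b₁ a₂ b₂ h1 h2 h3 h4
  obtain ⟨z, hz, hxz, hzy⟩ := sle_norm hx hy hxy
  have hzx : z ∈ Q jx := mono inf_le_left hz
  have hzjy : z ∈ Q jy := mono inf_le_right hz
  obtain ⟨⟨a₁', ha₁'Q, ha₁'x, ha₁'max⟩, ⟨b₁', hb₁'Q, hxb₁', hb₁'min⟩⟩ :=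
    hrc (i ⊓ jx) jx inf_le_right x hx
  obtain ⟨⟨az, hazQ, hazz, hazmax⟩, ⟨bz, hbzQ, hzbz, hbzmin⟩⟩ :=
    hrc (i ⊓ jx) jx inf_le_right z hzx
  obtain ⟨⟨az', haz'Q, haz'z, haz'max⟩, ⟨bz', hbz'Q, hzbz', hbz'min⟩⟩ :=
    hrc (i ⊓ jy) jy inf_le_right z hzjy
  obtain ⟨⟨a₂', ha₂'Q, ha₂'y, ha₂'max⟩, ⟨b₂', hb₂'Q, hyb₂', hb₂'min⟩⟩ :=
    hrc (i ⊓ jy) jy inf_le_right y hy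
  have ea1 : a₁' = a₁ := lower_eq hx ⟨ha₁'Q, ha₁'x, ha₁'max⟩ h1
  have eb1 : b₁' = b₁ := upper_eq hx ⟨hb₁'Q, hxb₁', hb₁'min⟩ h2
  have ea2 : a₂' = a₂ := lower_eq hy ⟨ha₂'Q, ha₂'y, ha₂'max⟩ h3
  have eb2 : b₂' = b₂ := upper_eq hy ⟨hb₂'Q, hyb₂', hb₂'min⟩ h4
  have eaz : az = az' :=
    lower_eq hzx ⟨hazQ, hazz, hazmax⟩
      ⟨mono inf_le_left haz'Q, sle_of (mono inf_le_right haz'Q) hzjy haz'z,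
       lower_max hzjy haz'Q haz'z haz'max⟩
  have ebz : bz = bz' :=
    upper_eq hzx ⟨hbzQ, hzbz, hbzmin⟩
      ⟨mono inf_le_left hbz'Q, sle_of hzjy (mono inf_le_right hbz'Q) hzbz',
       upper_min hzjy hbz'Q hzbz' hbz'min⟩
  have hI1 := hint (i ⊓ jx) jx inf_le_right x hx z hzx hxz a₁' b₁' az bz
    ⟨ha₁'Q, ha₁'x, ha₁'max⟩ ⟨hb₁'Q, hxb₁', hb₁'min⟩ ⟨hazQ, hazz, hazmax⟩ ⟨hbzQ, hzbz, hbzmin⟩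
  have hI2 := hint (i ⊓ jy) jy inf_le_right z hzjy y hy hzy az' bz' a₂' b₂'
    ⟨haz'Q, haz'z, haz'max⟩ ⟨hbz'Q, hzbz', hbz'min⟩ ⟨ha₂'Q, ha₂'y, ha₂'max⟩ ⟨hb₂'Q, hyb₂', hb₂'min⟩
  rcases hI1 with hba | ⟨haeq, hbeq⟩
  · left
    have s1 : sle b₁' az := sle_of (mono inf_le_right hb₁'Q) (mono inf_le_right hazQ) hba
    have s2 : sle az y := sle_trans (mono inf_le_right hazQ) hzx hy
      (sle_of (mono inf_le_right hazQ) hzx hazz) (sle_of hzjy hy hzy)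
    have s3 : sle az a₂ := h3.2.2 az (mono inf_le_left hazQ) s2
    have s4 : sle b₁' a₂ := sle_trans (mono inf_le_left hb₁'Q) (mono inf_le_left hazQ) h3.1 s1 s3
    rwa [eb1] at s4
  rcases hI2 with hba2 | ⟨haeq2, hbeq2⟩
  · left
    have s1 : sle bz' a₂' :=
      sle_of (mono inf_le_right hbz'Q) (mono inf_le_right ha₂'Q) hba2
    rw [← eb1, hbeq, ebz, ← ea2]
    exact s1
  · right
    exact ⟨by rw [← ea1, haeq, eaz, haeq2, ea2],
           by rw [← eb1, hbeq, ebz, hbeq2, eb2]⟩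
end

section
/- Let Λ be a meet-semilattice and let (Q_i, ≤_i)_{i∈Λ} be a normal interval diagram of posets in which each Q_i is a lattice (every two elements of Q_i have a least upper bound and a greatest lower bound in Q_i). Then: (i) the strong amalgam P is a lattice; (ii) each Q_i is a sublattice of P, i.e., for a, b ∈ Q_i the least upper bound and greatest lower bound of a and b in P belong to Q_i and coincide with those computed in Q_i; (iii) for all i, j ∈ Λ and all incomparable a ∈ Q_i and b ∈ Q_j, both a ⊔ b and a ⊓ b (computed in P) belong to Q_{i∧j}. -/
/-- Master lemma: everything about *joins* in the strong amalgam of a normal interval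
diagram of lattices. The meet statements follow by order duality. -/
theorem joinKey {Λ : Type*} [SemilatticeInf Λ] {X : Type*}
    (Q : Λ → Set X) (le : Λ → X → X → Prop)
    (hrefl : ∀ i, ∀ x ∈ Q i, le i x x)
    (hanti : ∀ i, ∀ x ∈ Q i, ∀ y ∈ Q i, le i x y → le i y x → x = y)
    (htrans : ∀ i, ∀ x ∈ Q i, ∀ y ∈ Q i, ∀ z ∈ Q i, le i x y → le i y z → le i x z)
    (hsub : ∀ i j, i ≤ j → Q i ⊆ Q j)
    (hcompat : ∀ i j, i ≤ j → ∀ x ∈ Q i, ∀ y ∈ Q i, (le i x y ↔ le j x y))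
    (hcap : ∀ i j, Q i ∩ Q j = Q (i ⊓ j))
    (hnorm : ∀ i j k, i ≤ k → j ≤ k → ∀ x ∈ Q i, ∀ y ∈ Q j, le k x y →
      ∃ z ∈ Q (i ⊓ j), le i x z ∧ le j z y)
    (hrc : ∀ i j, i ≤ j → ∀ x ∈ Q j,
      (∃ a, a ∈ Q i ∧ le j a x ∧ ∀ p ∈ Q i, le j p x → le j p a) ∧
      (∃ b, b ∈ Q i ∧ le j x b ∧ ∀ p ∈ Q i, le j x p → le j b p))
    (hint : ∀ i j, i ≤ j → ∀ x ∈ Q j, ∀ y ∈ Q j, le j x y →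
      ∀ a₁ b₁ a₂ b₂ : X,
        (a₁ ∈ Q i ∧ le j a₁ x ∧ ∀ p ∈ Q i, le j p x → le j p a₁) →
        (b₁ ∈ Q i ∧ le j x b₁ ∧ ∀ p ∈ Q i, le j x p → le j b₁ p) →
        (a₂ ∈ Q i ∧ le j a₂ y ∧ ∀ p ∈ Q i, le j p y → le j p a₂) →
        (b₂ ∈ Q i ∧ le j y b₂ ∧ ∀ p ∈ Q i, le j y p → le j b₂ p) →
        le j b₁ a₂ ∨ (a₁ = a₂ ∧ b₁ = b₂))
    (hlat : ∀ i, ∀ x ∈ Q i, ∀ y ∈ Q i,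
      (∃ s ∈ Q i, le i x s ∧ le i y s ∧ ∀ w ∈ Q i, le i x w → le i y w → le i s w) ∧
      (∃ t ∈ Q i, le i t x ∧ le i t y ∧ ∀ w ∈ Q i, le i w x → le i w y → le i w t))
    (sle : X → X → Prop)
    (hsle : ∀ x y, sle x y ↔ ∃ i j, x ∈ Q i ∧ y ∈ Q j ∧
      ∃ z ∈ Q (i ⊓ j), le i x z ∧ le j z y) :
    (∀ x y : X, (∃ i, x ∈ Q i) → (∃ j, y ∈ Q j) →
      ∃ s, sle x s ∧ sle y s ∧ ∀ w, sle x w → sle y w → sle s w) ∧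
    (∀ i, ∀ a ∈ Q i, ∀ b ∈ Q i,
      ∀ s, sle a s → sle b s → (∀ w, sle a w → sle b w → sle s w) →
        s ∈ Q i ∧ le i a s ∧ le i b s ∧ ∀ w ∈ Q i, le i a w → le i b w → le i s w) ∧
    (∀ i j, ∀ a ∈ Q i, ∀ b ∈ Q j, ¬ sle a b → ¬ sle b a →
      ∀ s, sle a s → sle b s → (∀ w, sle a w → sle b w → sle s w) → s ∈ Q (i ⊓ j)) := by
  classical
  -- `sle` extends each `le i`
  have sle_of_le : ∀ i x y, x ∈ Q i → y ∈ Q i → le i x y → sle x y := by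
    intro i x y hx hy h
    exact (hsle x y).2 ⟨i, i, hx, hy, y, by rw [inf_idem]; exact hy, h, hrefl i y hy⟩
  -- interpolation: any pair of indices works
  have interp : ∀ x y, sle x y → ∀ i j, x ∈ Q i → y ∈ Q j →
      ∃ z, z ∈ Q (i ⊓ j) ∧ le i x z ∧ le j z y := by
    intro x y hxy i j hx hy
    obtain ⟨i', j', hxi', hyj', z', hz', hxz', hz'y⟩ := (hsle x y).1 hxy
    have hx1 : x ∈ Q (i ⊓ i') := by rw [← hcap i i']; exact ⟨hx, hxi'⟩
    have hy1 : y ∈ Q (j ⊓ j') := by rw [← hcap j j']; exact ⟨hy, hyj'⟩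
    obtain ⟨w, hw, h1, h2⟩ :=
      hnorm (i ⊓ i') (i' ⊓ j') i' inf_le_right inf_le_left x hx1 z' hz' hxz'
    have hwi'j' : w ∈ Q (i' ⊓ j') := hsub _ _ inf_le_right hw
    have h2' : le j' w z' := (hcompat (i' ⊓ j') j' inf_le_right w hwi'j' z' hz').1 h2
    have hwy : le j' w y := htrans j' w (hsub _ _ inf_le_right hwi'j') z'
      (hsub _ _ inf_le_right hz') y hyj' h2' hz'y
    obtain ⟨u, hu, h3, h4⟩ :=
      hnorm ((i ⊓ i') ⊓ (i' ⊓ j')) (j ⊓ j') j' (inf_le_right.trans inf_le_right)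
        inf_le_right w hw y hy1 hwy
    have huQ : u ∈ Q (i ⊓ j) := hsub _ _
      (le_inf (inf_le_left.trans (inf_le_left.trans inf_le_left))
        (inf_le_right.trans inf_le_left)) hu
    have hu1 : u ∈ Q ((i ⊓ i') ⊓ (i' ⊓ j')) := hsub _ _ inf_le_left hu
    have h1' : le i x w :=
      (hcompat (i ⊓ i') i inf_le_left x hx1 w (hsub _ _ inf_le_left hw)).1 h1
    have h3' : le i w u :=
      (hcompat ((i ⊓ i') ⊓ (i' ⊓ j')) i (inf_le_left.trans inf_le_left) w hw u hu1).1 h3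
    have hxu : le i x u := htrans i x hx w
      (hsub _ _ (inf_le_left.trans inf_le_left) hw) u (hsub _ _ inf_le_left huQ) h1' h3'
    have h4' : le j u y :=
      (hcompat (j ⊓ j') j inf_le_left u (hsub _ _ inf_le_right hu) y hy1).1 h4
    exact ⟨u, huQ, hxu, h4'⟩
  -- transitivity of `sle`
  have strans : ∀ x y z, sle x y → sle y z → sle x z := by
    intro x y z h1 h2
    obtain ⟨i, j₁, hx, hy, -⟩ := (hsle x y).1 h1
    obtain ⟨j₂, k, hy2, hz, -⟩ := (hsle y z).1 h2
    obtain ⟨u, hu, hxu, huy⟩ := interp x y h1 i j₁ hx hy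
    obtain ⟨v, hv, hyv, hvz⟩ := interp y z h2 j₁ k hy hz
    have huv : le j₁ u v := htrans j₁ u (hsub _ _ inf_le_right hu) y hy v
      (hsub _ _ inf_le_left hv) huy hyv
    obtain ⟨w, hw, hw1, hw2⟩ :=
      hnorm (i ⊓ j₁) (j₁ ⊓ k) j₁ inf_le_right inf_le_left u hu v hv huv
    have hwik : w ∈ Q (i ⊓ k) := hsub _ _
      (le_inf (inf_le_left.trans inf_le_left) (inf_le_right.trans inf_le_right)) hw
    have hxw : le i x w := htrans i x hx u (hsub _ _ inf_le_left hu) w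
      (hsub _ _ inf_le_left hwik) hxu
      ((hcompat (i ⊓ j₁) i inf_le_left u hu w (hsub _ _ inf_le_left hw)).1 hw1)
    have hwz : le k w z := htrans k w (hsub _ _ inf_le_right hwik) v
      (hsub _ _ inf_le_right hv) z hz
      ((hcompat (j₁ ⊓ k) k inf_le_right w (hsub _ _ inf_le_right hw) v hv).1 hw2) hvz
    exact (hsle x z).2 ⟨i, k, hx, hz, w, hwik, hxw, hwz⟩
  -- antisymmetry of `sle`
  have santi : ∀ x y, sle x y → sle y x → x = y := by
    intro x y h1 h2
    obtain ⟨i, j, hx, hy, -⟩ := (hsle x y).1 h1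
    obtain ⟨u, hu, hxu, huy⟩ := interp x y h1 i j hx hy
    obtain ⟨v, hv', hyv, hvx⟩ := interp y x h2 j i hy hx
    have hv : v ∈ Q (i ⊓ j) := hsub _ _ (le_inf inf_le_right inf_le_left) hv'
    have huv : le j u v := htrans j u (hsub _ _ inf_le_right hu) y hy v
      (hsub _ _ inf_le_left hv') huy hyv
    have hvu : le i v u := htrans i v (hsub _ _ inf_le_left hv) x hx u
      (hsub _ _ inf_le_left hu) hvx hxu
    have h5 : le (i ⊓ j) u v := (hcompat (i ⊓ j) j inf_le_right u hu v hv).2 huv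
    have h6 : le (i ⊓ j) v u := (hcompat (i ⊓ j) i inf_le_left v hv u hu).2 hvu
    have huv' : u = v := hanti (i ⊓ j) u hu v hv h5 h6
    have hux : le i u x := by rw [huv']; exact hvx
    have hyu : le j y u := by rw [huv']; exact hyv
    have hxu' : x = u := hanti i x hx u (hsub _ _ inf_le_left hu) hxu hux
    have huy' : u = y := hanti j u (hsub _ _ inf_le_right hu) y hy huy hyu
    exact hxu'.trans huy'
  -- transfer an amalgam bound to a projection bound
  have sdown : ∀ i k x w wh, x ∈ Q i → w ∈ Q k → sle x w → wh ∈ Q (i ⊓ k) →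
      (∀ p ∈ Q (i ⊓ k), le k p w → le k p wh) → le i x wh := by
    intro i k x w wh hx hw hxw hwh hmax
    obtain ⟨u, hu, hxu, huw⟩ := interp x w hxw i k hx hw
    have h1 : le k u wh := hmax u hu huw
    have h2 : le (i ⊓ k) u wh := (hcompat (i ⊓ k) k inf_le_right u hu wh hwh).2 h1
    have h3 : le i u wh := (hcompat (i ⊓ k) i inf_le_left u hu wh hwh).1 h2
    exact htrans i x hx u (hsub _ _ inf_le_left hu) wh (hsub _ _ inf_le_left hwh) hxu h3
  -- the "c-trick": joining with a projection of the other element stays in Q m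
  have core : ∀ m i j a b, m ≤ i → m ≤ j → a ∈ Q i → b ∈ Q j → ¬ sle b a →
      ∀ ap, (ap ∈ Q m ∧ le i a ap ∧ ∀ p ∈ Q m, le i a p → le i ap p) →
      ∀ bp, (bp ∈ Q m ∧ le j b bp ∧ ∀ p ∈ Q m, le j b p → le j bp p) →
      ∀ wh, wh ∈ Q i → le i a wh → le i bp wh →
      ∃ c, c ∈ Q m ∧ le m ap c ∧ le m bp c ∧ le i c wh := by
    intro m i j a b hmi hmj ha hb hba ap ⟨hap, haap, hapmin⟩ bp ⟨hbp, hbbp, hbpmin⟩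
      wh hwh hawh hbpwh
    obtain ⟨c, hc, hac, hbpc, hcmin⟩ := (hlat i a ha bp (hsub _ _ hmi hbp)).1
    have hcwh : le i c wh := hcmin wh hwh hawh hbpwh
    obtain ⟨cm, hcm, hcmc, hcmmax⟩ := (hrc m i hmi c hc).1
    obtain ⟨cp, hcp, hccp, hcpmin⟩ := (hrc m i hmi c hc).2
    obtain ⟨am, ham, hama, hammax⟩ := (hrc m i hmi a ha).1
    have hcase := hint m i hmi a ha c hc hac am ap cm cp
      ⟨ham, hama, hammax⟩ ⟨hap, haap, hapmin⟩ ⟨hcm, hcmc, hcmmax⟩ ⟨hcp, hccp, hcpmin⟩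
    rcases hcase with h | ⟨h1, -⟩
    · have hacm : le i a cm := htrans i a ha ap (hsub _ _ hmi hap) cm
        (hsub _ _ hmi hcm) haap h
      have hbpcm : le i bp cm := hcmmax bp hbp hbpc
      have hccm : le i c cm := hcmin cm (hsub _ _ hmi hcm) hacm hbpcm
      have hceq : c = cm := hanti i c hc cm (hsub _ _ hmi hcm) hccm hcmc
      have hcQ : c ∈ Q m := by rw [hceq]; exact hcm
      have hapc : le i ap c := hapmin c hcQ hac
      exact ⟨c, hcQ, (hcompat m i hmi ap hap c hcQ).2 hapc,
        (hcompat m i hmi bp hbp c hcQ).2 hbpc, hcwh⟩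
    · exfalso
      have hbpam : le i bp am := by rw [h1]; exact hcmmax bp hbp hbpc
      have h2 : le m bp am := (hcompat m i hmi bp hbp am ham).2 hbpam
      have h3 : le j bp am := (hcompat m j hmj bp hbp am ham).1 h2
      have h4 : le j b am := htrans j b hb bp (hsub _ _ hmj hbp) am
        (hsub _ _ hmj ham) hbbp h3
      exact hba ((hsle b a).2 ⟨j, i, hb, ha, am,
        hsub _ _ (le_inf hmj hmi) ham, h4, hama⟩)
  -- the main construction: join of incomparable elements
  have main : ∀ i j a b, a ∈ Q i → b ∈ Q j → ¬ sle a b → ¬ sle b a →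
      ∃ s, s ∈ Q (i ⊓ j) ∧ sle a s ∧ sle b s ∧ ∀ w, sle a w → sle b w → sle s w := by
    intro i j a b ha hb hab hba
    obtain ⟨ap, hap, haap, hapmin⟩ := (hrc (i ⊓ j) i inf_le_left a ha).2
    obtain ⟨bp, hbp, hbbp, hbpmin⟩ := (hrc (i ⊓ j) j inf_le_right b hb).2
    obtain ⟨s, hs, haps, hbps, hsmin⟩ := (hlat (i ⊓ j) ap hap bp hbp).1
    have has : sle a s := (hsle a s).2 ⟨i, i ⊓ j, ha, hs, ap,
      hsub _ _ (le_inf inf_le_left le_rfl) hap, haap, haps⟩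
    have hbs : sle b s := (hsle b s).2 ⟨j, i ⊓ j, hb, hs, bp,
      hsub _ _ (le_inf inf_le_right le_rfl) hbp, hbbp, hbps⟩
    refine ⟨s, hs, has, hbs, ?_⟩
    intro w haw hbw
    obtain ⟨i₀, k, -, hw, -⟩ := (hsle a w).1 haw
    obtain ⟨wh, hwh, hwhw, hwhmax⟩ := (hrc (i ⊓ k) k inf_le_right w hw).1
    obtain ⟨wh', hwh', hwh'w, hwh'max⟩ := (hrc (j ⊓ k) k inf_le_right w hw).1
    have hawh : le i a wh := sdown i k a w wh ha hw haw hwh hwhmax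
    have hbwh' : le j b wh' := sdown j k b w wh' hb hw hbw hwh' hwh'max
    obtain ⟨d₁, hd₁, hd₁wh', hd₁max⟩ :=
      (hrc (i ⊓ k) k inf_le_right wh' (hsub _ _ inf_le_right hwh')).1
    obtain ⟨e₁, he₁, hwh'e₁, he₁min⟩ :=
      (hrc (i ⊓ k) k inf_le_right wh' (hsub _ _ inf_le_right hwh')).2
    obtain ⟨e₂, he₂, hwe₂, he₂min⟩ := (hrc (i ⊓ k) k inf_le_right w hw).2
    have hcases := hint (i ⊓ k) k inf_le_right wh' (hsub _ _ inf_le_right hwh') w hw hwh'w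
      d₁ e₁ wh e₂ ⟨hd₁, hd₁wh', hd₁max⟩ ⟨he₁, hwh'e₁, he₁min⟩ ⟨hwh, hwhw, hwhmax⟩
      ⟨he₂, hwe₂, he₂min⟩
    rcases hcases with h | ⟨h1, -⟩
    · -- wh' ≤ wh in Q k
      have hwh'wh : le k wh' wh := htrans k wh' (hsub _ _ inf_le_right hwh') e₁
        (hsub _ _ inf_le_right he₁) wh (hsub _ _ inf_le_right hwh) hwh'e₁ h
      have hbwhQ : sle b wh := (hsle b wh).2 ⟨j, k, hb, hsub _ _ inf_le_right hwh,
        wh', hwh', hbwh', hwh'wh⟩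
      obtain ⟨u, hu, hbu, huwh⟩ := interp b wh hbwhQ j i hb (hsub _ _ inf_le_left hwh)
      have hum : u ∈ Q (i ⊓ j) := hsub _ _ (le_inf inf_le_right inf_le_left) hu
      have hbpu : le j bp u := hbpmin u hum hbu
      have h5 : le (i ⊓ j) bp u := (hcompat (i ⊓ j) j inf_le_right bp hbp u hum).2 hbpu
      have h6 : le i bp u := (hcompat (i ⊓ j) i inf_le_left bp hbp u hum).1 h5
      have hbpwh2 : le i bp wh := htrans i bp (hsub _ _ inf_le_left hbp) u
        (hsub _ _ inf_le_left hum) wh (hsub _ _ inf_le_left hwh) h6 huwh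
      obtain ⟨c, hcQ, hapc, hbpc, hcwh⟩ := core (i ⊓ j) i j a b inf_le_left inf_le_right
        ha hb hba ap ⟨hap, haap, hapmin⟩ bp ⟨hbp, hbbp, hbpmin⟩ wh
        (hsub _ _ inf_le_left hwh) hawh hbpwh2
      have hsc : le (i ⊓ j) s c := hsmin c hcQ hapc hbpc
      have hscw : sle c w := (hsle c w).2 ⟨i, k, hsub _ _ inf_le_left hcQ, hw, wh, hwh,
        hcwh, hwhw⟩
      exact strans s c w (sle_of_le (i ⊓ j) s c hs hcQ hsc) hscw
    · -- wh ≤ wh' in Q k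
      have hwhwh' : le k wh wh' := by rw [← h1]; exact hd₁wh'
      have hawh'Q : sle a wh' := (hsle a wh').2 ⟨i, k, ha, hsub _ _ inf_le_right hwh',
        wh, hwh, hawh, hwhwh'⟩
      obtain ⟨u, hu, hau, huwh'⟩ := interp a wh' hawh'Q i j ha (hsub _ _ inf_le_left hwh')
      have hapu : le i ap u := hapmin u hu hau
      have h5 : le (i ⊓ j) ap u := (hcompat (i ⊓ j) i inf_le_left ap hap u hu).2 hapu
      have h6 : le j ap u := (hcompat (i ⊓ j) j inf_le_right ap hap u hu).1 h5
      have hapwh' : le j ap wh' := htrans j ap (hsub _ _ inf_le_right hap) u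
        (hsub _ _ inf_le_right hu) wh' (hsub _ _ inf_le_left hwh') h6 huwh'
      obtain ⟨c, hcQ', hbpc, hapc, hcwh'⟩ := core (i ⊓ j) j i b a inf_le_right inf_le_left
        hb ha hab bp ⟨hbp, hbbp, hbpmin⟩ ap ⟨hap, haap, hapmin⟩ wh'
        (hsub _ _ inf_le_left hwh') hbwh' hapwh'
      have hsc : le (i ⊓ j) s c := hsmin c hcQ' hapc hbpc
      have hscw : sle c w := (hsle c w).2 ⟨j, k, hsub _ _ inf_le_right hcQ', hw, wh', hwh',
        hcwh', hwh'w⟩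
      exact strans s c w (sle_of_le (i ⊓ j) s c hs hcQ' hsc) hscw
  refine ⟨?_, ?_, ?_⟩
  · -- (i) joins exist
    rintro x y ⟨i, hx⟩ ⟨j, hy⟩
    by_cases hxy : sle x y
    · exact ⟨y, hxy, sle_of_le j y y hy hy (hrefl j y hy), fun w _ h2 => h2⟩
    by_cases hyx : sle y x
    · exact ⟨x, sle_of_le i x x hx hx (hrefl i x hx), hyx, fun w h1 _ => h1⟩
    obtain ⟨s, -, h1, h2, h3⟩ := main i j x y hx hy hxy hyx
    exact ⟨s, h1, h2, h3⟩
  · -- (ii) sublattice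
    intro i a ha b hb s hs1 hs2 hs3
    obtain ⟨s₀, hs₀, has₀, hbs₀, hmin₀⟩ := (hlat i a ha b hb).1
    have hup1 : sle a s₀ := sle_of_le i a s₀ ha hs₀ has₀
    have hup2 : sle b s₀ := sle_of_le i b s₀ hb hs₀ hbs₀
    have hminP : ∀ w, sle a w → sle b w → sle s₀ w := by
      intro w haw hbw
      obtain ⟨i₀, k, -, hw, -⟩ := (hsle a w).1 haw
      obtain ⟨wh, hwh, hwhw, hwhmax⟩ := (hrc (i ⊓ k) k inf_le_right w hw).1
      have hawh : le i a wh := sdown i k a w wh ha hw haw hwh hwhmax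
      have hbwh : le i b wh := sdown i k b w wh hb hw hbw hwh hwhmax
      have hs₀wh : le i s₀ wh := hmin₀ wh (hsub _ _ inf_le_left hwh) hawh hbwh
      exact (hsle s₀ w).2 ⟨i, k, hs₀, hw, wh, hwh, hs₀wh, hwhw⟩
    have hE : s = s₀ := santi s s₀ (hs3 s₀ hup1 hup2) (hminP s hs1 hs2)
    rw [hE]
    exact ⟨hs₀, has₀, hbs₀, hmin₀⟩
  · -- (iii) membership of the join of incomparables
    intro i j a ha b hb hab hba s hs1 hs2 hs3
    obtain ⟨s₀, hs₀Q, h1, h2, h3⟩ := main i j a b ha hb hab hba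
    have hE : s = s₀ := santi s s₀ (hs3 s₀ h1 h2) (h3 s hs1 hs2)
    rw [hE]; exact hs₀Q

/-- Let `(Q i, le i)` be a normal interval diagram of lattices indexed
by a meet-semilattice `Λ`, with strong amalgam order `sle` on `P = ⋃ i, Q i`. Then:
(i) `P` is a lattice; (ii) each `Q i` is a sublattice of `P`; (iii) for incomparable
`a ∈ Q i`, `b ∈ Q j`, both `a ⊔ b` and `a ⊓ b` (computed in `P`) belong to `Q (i ⊓ j)`. -/
theorem stmt17 {Λ : Type*} [SemilatticeInf Λ] {X : Type*}
    (Q : Λ → Set X) (le : Λ → X → X → Prop)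
    (hrefl : ∀ i, ∀ x ∈ Q i, le i x x)
    (hanti : ∀ i, ∀ x ∈ Q i, ∀ y ∈ Q i, le i x y → le i y x → x = y)
    (htrans : ∀ i, ∀ x ∈ Q i, ∀ y ∈ Q i, ∀ z ∈ Q i, le i x y → le i y z → le i x z)
    (hsub : ∀ i j, i ≤ j → Q i ⊆ Q j)
    (hcompat : ∀ i j, i ≤ j → ∀ x ∈ Q i, ∀ y ∈ Q i, (le i x y ↔ le j x y))
    (hcap : ∀ i j, Q i ∩ Q j = Q (i ⊓ j))
    (hnorm : ∀ i j k, i ≤ k → j ≤ k → ∀ x ∈ Q i, ∀ y ∈ Q j, le k x y →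
      ∃ z ∈ Q (i ⊓ j), le i x z ∧ le j z y)
    (hrc : ∀ i j, i ≤ j → ∀ x ∈ Q j,
      (∃ a, a ∈ Q i ∧ le j a x ∧ ∀ p ∈ Q i, le j p x → le j p a) ∧
      (∃ b, b ∈ Q i ∧ le j x b ∧ ∀ p ∈ Q i, le j x p → le j b p))
    (hint : ∀ i j, i ≤ j → ∀ x ∈ Q j, ∀ y ∈ Q j, le j x y →
      ∀ a₁ b₁ a₂ b₂ : X,
        (a₁ ∈ Q i ∧ le j a₁ x ∧ ∀ p ∈ Q i, le j p x → le j p a₁) →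
        (b₁ ∈ Q i ∧ le j x b₁ ∧ ∀ p ∈ Q i, le j x p → le j b₁ p) →
        (a₂ ∈ Q i ∧ le j a₂ y ∧ ∀ p ∈ Q i, le j p y → le j p a₂) →
        (b₂ ∈ Q i ∧ le j y b₂ ∧ ∀ p ∈ Q i, le j y p → le j b₂ p) →
        le j b₁ a₂ ∨ (a₁ = a₂ ∧ b₁ = b₂))
    (hlat : ∀ i, ∀ x ∈ Q i, ∀ y ∈ Q i,
      (∃ s ∈ Q i, le i x s ∧ le i y s ∧ ∀ w ∈ Q i, le i x w → le i y w → le i s w) ∧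
      (∃ t ∈ Q i, le i t x ∧ le i t y ∧ ∀ w ∈ Q i, le i w x → le i w y → le i w t))
    (sle : X → X → Prop)
    (hsle : ∀ x y, sle x y ↔ ∃ i j, x ∈ Q i ∧ y ∈ Q j ∧
      ∃ z ∈ Q (i ⊓ j), le i x z ∧ le j z y) :
    -- (i) the strong amalgam is a lattice
    (∀ x y : X, (∃ i, x ∈ Q i) → (∃ j, y ∈ Q j) →
      (∃ s, sle x s ∧ sle y s ∧ ∀ w, sle x w → sle y w → sle s w) ∧
      (∃ t, sle t x ∧ sle t y ∧ ∀ w, sle w x → sle w y → sle w t)) ∧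
    -- (ii) each Q i is a sublattice of the amalgam
    (∀ i, ∀ a ∈ Q i, ∀ b ∈ Q i,
      (∀ s, sle a s → sle b s → (∀ w, sle a w → sle b w → sle s w) →
        s ∈ Q i ∧ le i a s ∧ le i b s ∧ ∀ w ∈ Q i, le i a w → le i b w → le i s w) ∧
      (∀ t, sle t a → sle t b → (∀ w, sle w a → sle w b → sle w t) →
        t ∈ Q i ∧ le i t a ∧ le i t b ∧ ∀ w ∈ Q i, le i w a → le i w b → le i w t)) ∧
    -- (iii) joins and meets of incomparable elements land in Q (i ⊓ j)
    (∀ i j, ∀ a ∈ Q i, ∀ b ∈ Q j, ¬ sle a b → ¬ sle b a →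
      (∀ s, sle a s → sle b s → (∀ w, sle a w → sle b w → sle s w) → s ∈ Q (i ⊓ j)) ∧
      (∀ t, sle t a → sle t b → (∀ w, sle w a → sle w b → sle w t) → t ∈ Q (i ⊓ j))) := by
  have K1 := joinKey Q le hrefl hanti htrans hsub hcompat hcap hnorm hrc hint hlat sle hsle
  have K2 := joinKey Q (fun i x y => le i y x)
    (fun i x hx => hrefl i x hx)
    (fun i x hx y hy h1 h2 => hanti i x hx y hy h2 h1)
    (fun i x hx y hy z hz h1 h2 => htrans i z hz y hy x hx h2 h1)
    hsub
    (fun i j h x hx y hy => hcompat i j h y hy x hx)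
    hcap
    (fun i j k hik hjk x hx y hy h => by
      obtain ⟨z, hz, h1, h2⟩ := hnorm j i k hjk hik y hy x hx h
      exact ⟨z, hsub _ _ (le_inf inf_le_right inf_le_left) hz, h2, h1⟩)
    (fun i j h x hx => ⟨(hrc i j h x hx).2, (hrc i j h x hx).1⟩)
    (fun i j h x hx y hy hxy a₁ b₁ a₂ b₂ t1 t2 t3 t4 => by
      rcases hint i j h y hy x hx hxy b₂ a₂ b₁ a₁ t4 t3 t2 t1 with hc | ⟨e1, e2⟩
      · exact Or.inl hc
      · exact Or.inr ⟨e2.symm, e1.symm⟩)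
    (fun i x hx y hy => ⟨(hlat i x hx y hy).2, (hlat i x hx y hy).1⟩)
    (fun x y => sle y x)
    (fun x y => ⟨fun h => by
        obtain ⟨i₀, j₀, hy, hx, z, hz, h1, h2⟩ := (hsle y x).1 h
        exact ⟨j₀, i₀, hx, hy, z, hsub _ _ (le_inf inf_le_right inf_le_left) hz, h2, h1⟩,
      fun ⟨i, j, hx, hy, z, hz, h1, h2⟩ => (hsle y x).2
        ⟨j, i, hy, hx, z, hsub _ _ (le_inf inf_le_right inf_le_left) hz, h2, h1⟩⟩)
  refine ⟨fun x y hx hy => ⟨K1.1 x y hx hy, K2.1 x y hx hy⟩,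
    fun i a ha b hb => ⟨fun s h1 h2 h3 => K1.2.1 i a ha b hb s h1 h2 h3,
      fun t h1 h2 h3 => K2.2.1 i a ha b hb t h1 h2 h3⟩,
    fun i j a ha b hb hab hba => ⟨fun s h1 h2 h3 => K1.2.2 i j a ha b hb hab hba s h1 h2 h3,
      fun t h1 h2 h3 => K2.2.2 i j a ha b hb hba hab t h1 h2 h3⟩⟩
end

section
/- Let Λ be a nonempty lower finite meet-semilattice with least element 0, and let (Q_i, ≤_i)_{i∈Λ} be a normal interval diagram of posets in which each Q_i is a lattice, with strong amalgam P and valuation ν. Then for every x ∈ P \ Q_0 there exist a largest element x_• of P with x_• < x and ν(x_•) < ν(x), and a least element x^• of P with x < x^• and ν(x^•) < ν(x). Furthermore: (i) ν(x_•) and ν(x^•) are comparable; (ii) setting i = max{ν(x_•), ν(x^•)}, x_• is the greatest element of Q_i below x in P and x^• is the least element of Q_i above x in P; (iii) for every y ∈ P with ν(x) ≰ ν(y): if x ≤ y then x^• ≤ y, and if y ≤ x then y ≤ x_•. -/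
/-- Let `Λ` be a nonempty lower finite meet-semilattice (with least
element `bot`) and `(Q i, le i)` a lower finite normal interval diagram of lattices, with
strong amalgam order `sle` on `P = ⋃ i, Q i` and valuation `ν`. Then every
`x ∈ P \ Q bot` admits a largest `x_•` below it and a least `x^•` above it with strictly
smaller valuation, and (i)–(iii) hold. -/
theorem stmt18 {Λ : Type*} [SemilatticeInf Λ] (bot : Λ) (hbot : ∀ i : Λ, bot ≤ i)
    (hLF : ∀ a : Λ, {i : Λ | i ≤ a}.Finite)
    {X : Type*} (Q : Λ → Set X) (le : Λ → X → X → Prop)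
    (hrefl : ∀ i, ∀ x ∈ Q i, le i x x)
    (hanti : ∀ i, ∀ x ∈ Q i, ∀ y ∈ Q i, le i x y → le i y x → x = y)
    (htrans : ∀ i, ∀ x ∈ Q i, ∀ y ∈ Q i, ∀ z ∈ Q i, le i x y → le i y z → le i x z)
    (hsub : ∀ i j, i ≤ j → Q i ⊆ Q j)
    (hcompat : ∀ i j, i ≤ j → ∀ x ∈ Q i, ∀ y ∈ Q i, (le i x y ↔ le j x y))
    (hcap : ∀ i j, Q i ∩ Q j = Q (i ⊓ j))
    (hnorm : ∀ i j k, i ≤ k → j ≤ k → ∀ x ∈ Q i, ∀ y ∈ Q j, le k x y →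
      ∃ z ∈ Q (i ⊓ j), le i x z ∧ le j z y)
    (hrc : ∀ i j, i ≤ j → ∀ x ∈ Q j,
      (∃ a, a ∈ Q i ∧ le j a x ∧ ∀ p ∈ Q i, le j p x → le j p a) ∧
      (∃ b, b ∈ Q i ∧ le j x b ∧ ∀ p ∈ Q i, le j x p → le j b p))
    (hint : ∀ i j, i ≤ j → ∀ x ∈ Q j, ∀ y ∈ Q j, le j x y →
      ∀ a₁ b₁ a₂ b₂ : X,
        (a₁ ∈ Q i ∧ le j a₁ x ∧ ∀ p ∈ Q i, le j p x → le j p a₁) →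
        (b₁ ∈ Q i ∧ le j x b₁ ∧ ∀ p ∈ Q i, le j x p → le j b₁ p) →
        (a₂ ∈ Q i ∧ le j a₂ y ∧ ∀ p ∈ Q i, le j p y → le j p a₂) →
        (b₂ ∈ Q i ∧ le j y b₂ ∧ ∀ p ∈ Q i, le j y p → le j b₂ p) →
        le j b₁ a₂ ∨ (a₁ = a₂ ∧ b₁ = b₂))
    (hlat : ∀ i, ∀ x ∈ Q i, ∀ y ∈ Q i,
      (∃ s ∈ Q i, le i x s ∧ le i y s ∧ ∀ w ∈ Q i, le i x w → le i y w → le i s w) ∧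
      (∃ t ∈ Q i, le i t x ∧ le i t y ∧ ∀ w ∈ Q i, le i w x → le i w y → le i w t))
    (sle : X → X → Prop)
    (hsle : ∀ x y, sle x y ↔ ∃ i j, x ∈ Q i ∧ y ∈ Q j ∧
      ∃ z ∈ Q (i ⊓ j), le i x z ∧ le j z y)
    (ν : X → Λ)
    (hν : ∀ x : X, (∃ i, x ∈ Q i) → x ∈ Q (ν x) ∧ ∀ i, x ∈ Q i → ν x ≤ i) :
    ∀ x : X, (∃ i, x ∈ Q i) → x ∉ Q bot →
      ∃ xl xu : X,
        -- x_• is the largest element < x of smaller valuation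
        (sle xl x ∧ xl ≠ x ∧ ν xl < ν x ∧
          ∀ z : X, sle z x → z ≠ x → ν z < ν x → sle z xl) ∧
        -- x^• is the least element > x of smaller valuation
        (sle x xu ∧ xu ≠ x ∧ ν xu < ν x ∧
          ∀ z : X, sle x z → z ≠ x → ν z < ν x → sle xu z) ∧
        -- (i) ν x_• and ν x^• are comparable
        (ν xl ≤ ν xu ∨ ν xu ≤ ν xl) ∧
        -- (ii) with i = max {ν x_•, ν x^•}: x_• = x_{Q i} and x^• = x^{Q i} in P
        (∀ i : Λ, (i = ν xl ∨ i = ν xu) → ν xl ≤ i → ν xu ≤ i →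
          (xl ∈ Q i ∧ sle xl x ∧ ∀ p ∈ Q i, sle p x → sle p xl) ∧
          (xu ∈ Q i ∧ sle x xu ∧ ∀ p ∈ Q i, sle x p → sle xu p)) ∧
        -- (iii)
        (∀ y : X, (∃ j, y ∈ Q j) → ¬ ν x ≤ ν y →
          (sle x y → sle xu y) ∧ (sle y x → sle y xl)) := by
  classical
  intro x hxP hxbot
  obtain ⟨hxn, hxmin⟩ := hν x hxP
  set n := ν x with hn
  -- basic helpers
  have memn : ∀ {i : Λ} {u : X}, i ≤ n → u ∈ Q i → u ∈ Q n := fun hi hu => hsub _ _ hi hu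
  have trn : ∀ {a b c : X}, a ∈ Q n → b ∈ Q n → c ∈ Q n → le n a b → le n b c → le n a c :=
    fun ha hb hc => htrans n _ ha _ hb _ hc
  have L2 : ∀ (k : Λ) (u v : X), u ∈ Q k → v ∈ Q k → le k u v → sle u v := by
    intro k u v hu hv h
    exact (hsle u v).mpr ⟨k, k, hu, hv, v, by rw [inf_idem]; exact hv, h, hrefl k v hv⟩
  have L4 : ∀ (a b : Λ) (u v : X), sle u v → u ∈ Q a → v ∈ Q b →
      ∃ z ∈ Q (a ⊓ b), le a u z ∧ le b z v := by
    intro a b u v huv hu hv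
    obtain ⟨i, j, hui, hvj, z, hz, h1, h2⟩ := (hsle u v).mp huv
    have hu' : u ∈ Q (a ⊓ i) := by rw [← hcap]; exact ⟨hu, hui⟩
    obtain ⟨w, hw, hw1, hw2⟩ := hnorm (a ⊓ i) (i ⊓ j) i inf_le_right inf_le_left u hu' z hz h1
    have hwij : w ∈ Q (i ⊓ j) := hsub _ _ inf_le_right hw
    have hwj : w ∈ Q j := hsub _ _ inf_le_right hwij
    have hzj : z ∈ Q j := hsub _ _ inf_le_right hz
    have hwzj : le j w z := (hcompat (i ⊓ j) j inf_le_right w hwij z hz).mp hw2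
    have hwvj : le j w v := htrans j w hwj z hzj v hvj hwzj h2
    have hv' : v ∈ Q (b ⊓ j) := by rw [← hcap]; exact ⟨hv, hvj⟩
    obtain ⟨t, ht, ht1, ht2⟩ := hnorm ((a ⊓ i) ⊓ (i ⊓ j)) (b ⊓ j) j
      (inf_le_right.trans inf_le_right) inf_le_right w hw v hv' hwvj
    have hma : (a ⊓ i) ⊓ (i ⊓ j) ≤ a := inf_le_left.trans inf_le_left
    refine ⟨t, hsub _ _ (le_inf (inf_le_left.trans hma)
      (inf_le_right.trans inf_le_left)) ht, ?_, ?_⟩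
    · have hwa : w ∈ Q (a ⊓ i) := hsub _ _ inf_le_left hw
      have h3 : le a u w := (hcompat (a ⊓ i) a inf_le_left u hu' w hwa).mp hw1
      have htm : t ∈ Q ((a ⊓ i) ⊓ (i ⊓ j)) := hsub _ _ inf_le_left ht
      have h4 : le a w t := (hcompat _ a hma w hw t htm).mp ht1
      exact htrans a u hu w (hsub _ _ hma hw) t (hsub _ _ hma htm) h3 h4
    · have htb : t ∈ Q (b ⊓ j) := hsub _ _ inf_le_right ht
      exact (hcompat (b ⊓ j) b inf_le_left t htb v hv').mp ht2
  have L3 : ∀ (k : Λ) (u v : X), u ∈ Q k → v ∈ Q k → sle u v → le k u v := by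
    intro k u v hu hv huv
    obtain ⟨z, hz, h1, h2⟩ := L4 k k u v huv hu hv
    rw [inf_idem] at hz
    exact htrans k u hu z hz v hv h1 h2
  have hnbot : n ≠ bot := fun h => hxbot (by rw [h] at hxn; exact hxn)
  have hxnot : ∀ i, i ≤ n → i ≠ n → x ∉ Q i :=
    fun i hi hne h => hne (le_antisymm hi (hxmin i h))
  have hprojA : ∀ i, ∃ a, i ≤ n → a ∈ Q i ∧ le n a x ∧ ∀ p ∈ Q i, le n p x → le n p a := by
    intro i
    by_cases h : i ≤ n
    · obtain ⟨a, ha⟩ := (hrc i n h x hxn).1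
      exact ⟨a, fun _ => ha⟩
    · exact ⟨x, fun h' => absurd h' h⟩
  choose A hA using hprojA
  have hA1 : ∀ i, i ≤ n → A i ∈ Q i := fun i hi => (hA i hi).1
  have hA2 : ∀ i, i ≤ n → le n (A i) x := fun i hi => (hA i hi).2.1
  have hA3 : ∀ i, i ≤ n → ∀ p ∈ Q i, le n p x → le n p (A i) := fun i hi => (hA i hi).2.2
  have hprojB : ∀ i, ∃ b, i ≤ n → b ∈ Q i ∧ le n x b ∧ ∀ p ∈ Q i, le n x p → le n b p := by
    intro i
    by_cases h : i ≤ n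
    · obtain ⟨b, hb⟩ := (hrc i n h x hxn).2
      exact ⟨b, fun _ => hb⟩
    · exact ⟨x, fun h' => absurd h' h⟩
  choose B hB using hprojB
  have hB1 : ∀ i, i ≤ n → B i ∈ Q i := fun i hi => (hB i hi).1
  have hB2 : ∀ i, i ≤ n → le n x (B i) := fun i hi => (hB i hi).2.1
  have hB3 : ∀ i, i ≤ n → ∀ p ∈ Q i, le n x p → le n (B i) p := fun i hi => (hB i hi).2.2
  have hAn : ∀ i, i ≤ n → A i ∈ Q n := fun i hi => memn hi (hA1 i hi)
  have hBn : ∀ i, i ≤ n → B i ∈ Q n := fun i hi => memn hi (hB1 i hi)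
  have hAcomp : ∀ i j, i ≤ n → j ≤ n → le n (A i) (A j) ∨ le n (A j) (A i) := by
    intro i j hi hj
    obtain ⟨⟨a', ha'⟩, ⟨b', hb'⟩⟩ := hrc j n hj (A i) (hAn i hi)
    rcases hint j n hj (A i) (hAn i hi) x hxn (hA2 i hi) a' b' (A j) (B j) ha' hb'
      ⟨hA1 j hj, hA2 j hj, hA3 j hj⟩ ⟨hB1 j hj, hB2 j hj, hB3 j hj⟩ with h | h
    · left; exact trn (hAn i hi) (memn hj hb'.1) (hAn j hj) hb'.2.1 h
    · right; rw [← h.1]; exact ha'.2.1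
  have hBcomp : ∀ i j, i ≤ n → j ≤ n → le n (B i) (B j) ∨ le n (B j) (B i) := by
    intro i j hi hj
    obtain ⟨⟨a', ha'⟩, ⟨b', hb'⟩⟩ := hrc j n hj (B i) (hBn i hi)
    rcases hint j n hj x hxn (B i) (hBn i hi) (hB2 i hi) (A j) (B j) a' b'
      ⟨hA1 j hj, hA2 j hj, hA3 j hj⟩ ⟨hB1 j hj, hB2 j hj, hB3 j hj⟩ ha' hb' with h | h
    · right; exact trn (hBn j hj) (memn hj ha'.1) (hBn i hi) h ha'.2.1
    · left; rw [h.2]; exact hb'.2.1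
  have chainmax : ∀ (f : Λ → X) (r : X → X → Prop),
      (∀ i, i ≤ n → r (f i) (f i)) →
      (∀ i j k, i ≤ n → j ≤ n → k ≤ n → r (f i) (f j) → r (f j) (f k) → r (f i) (f k)) →
      (∀ i j, i ≤ n → j ≤ n → r (f i) (f j) ∨ r (f j) (f i)) →
      ∀ s : Finset Λ, (∀ i ∈ s, i ≤ n) → s.Nonempty → ∃ i₀ ∈ s, ∀ i ∈ s, r (f i) (f i₀) := by
    intro f r hr ht hc s
    induction s using Finset.induction_on with
    | empty => intro _ h; simp at h
    | @insert a t hat ih =>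
      intro hsub' _
      by_cases hne : t.Nonempty
      · obtain ⟨i₀, hi₀, hmax⟩ := ih (fun i hi => hsub' i (Finset.mem_insert_of_mem hi)) hne
        have ha : a ≤ n := hsub' a (Finset.mem_insert_self a t)
        have hi₀n : i₀ ≤ n := hsub' i₀ (Finset.mem_insert_of_mem hi₀)
        rcases hc a i₀ ha hi₀n with h | h
        · refine ⟨i₀, Finset.mem_insert_of_mem hi₀, ?_⟩
          intro i hi
          rcases Finset.mem_insert.mp hi with rfl | hi
          · exact h
          · exact hmax i hi
        · refine ⟨a, Finset.mem_insert_self a t, ?_⟩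
          intro i hi
          rcases Finset.mem_insert.mp hi with rfl | hi
          · exact hr i ha
          · exact ht i i₀ a (hsub' i (Finset.mem_insert_of_mem hi)) hi₀n ha (hmax i hi) h
      · rw [Finset.not_nonempty_iff_eq_empty] at hne
        subst hne
        refine ⟨a, Finset.mem_insert_self a ∅, ?_⟩
        intro i hi
        rcases Finset.mem_insert.mp hi with rfl | hi
        · exact hr i (hsub' i (Finset.mem_insert_self i ∅))
        · simp at hi
  set s : Finset Λ := (hLF n).toFinset.filter (fun i => i ≠ n) with hs_def
  have hs_mem : ∀ i, i ∈ s ↔ i ≤ n ∧ i ≠ n := by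
    intro i
    simp [hs_def, Set.Finite.mem_toFinset]
  have hs_ne : s.Nonempty := ⟨bot, (hs_mem bot).mpr ⟨hbot n, fun h => hnbot h.symm⟩⟩
  obtain ⟨i₀, hi₀s, hmaxA⟩ := chainmax A (le n) (fun i hi => hrefl n (A i) (hAn i hi))
    (fun i j k hi hj hk => trn (hAn i hi) (hAn j hj) (hAn k hk)) hAcomp s
    (fun i hi => ((hs_mem i).mp hi).1) hs_ne
  obtain ⟨j₀, hj₀s, hminB⟩ := chainmax B (fun u v => le n v u)
    (fun i hi => hrefl n (B i) (hBn i hi))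
    (fun i j k hi hj hk h1 h2 => trn (hBn k hk) (hBn j hj) (hBn i hi) h2 h1)
    (fun i j hi hj => hBcomp j i hj hi) s
    (fun i hi => ((hs_mem i).mp hi).1) hs_ne
  obtain ⟨hi₀n, hi₀ne⟩ := (hs_mem i₀).mp hi₀s
  obtain ⟨hj₀n, hj₀ne⟩ := (hs_mem j₀).mp hj₀s
  set xl := A i₀ with hxl_def
  set xu := B j₀ with hxu_def
  have hxlQn : xl ∈ Q n := hAn i₀ hi₀n
  have hxuQn : xu ∈ Q n := hBn j₀ hj₀n
  have hxl_le : le n xl x := hA2 i₀ hi₀n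
  have hxu_ge : le n x xu := hB2 j₀ hj₀n
  have hmax : ∀ i, i ≤ n → i ≠ n → le n (A i) xl :=
    fun i hi hne => hmaxA i ((hs_mem i).mpr ⟨hi, hne⟩)
  have hmin : ∀ i, i ≤ n → i ≠ n → le n xu (B i) :=
    fun i hi hne => hminB i ((hs_mem i).mpr ⟨hi, hne⟩)
  have hxl_ne : xl ≠ x := fun h => hxnot i₀ hi₀n hi₀ne (h ▸ hA1 i₀ hi₀n)
  have hxu_ne : xu ≠ x := fun h => hxnot j₀ hj₀n hj₀ne (h ▸ hB1 j₀ hj₀n)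
  obtain ⟨hxlQl, hxlmin⟩ := hν xl ⟨i₀, hA1 i₀ hi₀n⟩
  obtain ⟨hxuQm, hxumin⟩ := hν xu ⟨j₀, hB1 j₀ hj₀n⟩
  have hl_le : ν xl ≤ n := (hxlmin i₀ (hA1 i₀ hi₀n)).trans hi₀n
  have hl_ne : ν xl ≠ n := fun h => hi₀ne (le_antisymm hi₀n (h ▸ hxlmin i₀ (hA1 i₀ hi₀n)))
  have hm_le : ν xu ≤ n := (hxumin j₀ (hB1 j₀ hj₀n)).trans hj₀n
  have hm_ne : ν xu ≠ n := fun h => hj₀ne (le_antisymm hj₀n (h ▸ hxumin j₀ (hB1 j₀ hj₀n)))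
  have hνxl_lt : ν xl < n := lt_of_le_of_ne hl_le hl_ne
  have hνxu_lt : ν xu < n := lt_of_le_of_ne hm_le hm_ne
  have hxl_max : ∀ z : X, sle z x → z ≠ x → ν z < n → sle z xl := by
    intro z hzx hzne hzlt
    obtain ⟨i', j', hzi, hxj', w, hw, hh1, hh2⟩ := (hsle z x).mp hzx
    obtain ⟨hzQ, -⟩ := hν z ⟨i', hzi⟩
    have hzn : z ∈ Q n := memn hzlt.le hzQ
    have h1 : le n z x := L3 n z x hzn hxn hzx
    have h2 : le n z (A (ν z)) := hA3 (ν z) hzlt.le z hzQ h1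
    have h3 : le n (A (ν z)) xl := hmax (ν z) hzlt.le hzlt.ne
    exact L2 n z xl hzn hxlQn (trn hzn (hAn (ν z) hzlt.le) hxlQn h2 h3)
  have hxu_min : ∀ z : X, sle x z → z ≠ x → ν z < n → sle xu z := by
    intro z hxz hzne hzlt
    obtain ⟨i', j', hxi', hzj', w, hw, hh1, hh2⟩ := (hsle x z).mp hxz
    obtain ⟨hzQ, -⟩ := hν z ⟨j', hzj'⟩
    have hzn : z ∈ Q n := memn hzlt.le hzQ
    have h1 : le n x z := L3 n x z hxn hzn hxz
    have h2 : le n (B (ν z)) z := hB3 (ν z) hzlt.le z hzQ h1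
    have h3 : le n xu (B (ν z)) := hmin (ν z) hzlt.le hzlt.ne
    exact L2 n xu z hxuQn hzn (trn hxuQn (hBn (ν z) hzlt.le) hzn h3 h2)
  have hcompval : ν xl ≤ ν xu ∨ ν xu ≤ ν xl := by
    by_contra hcon
    push_neg at hcon
    obtain ⟨h1, h2⟩ := hcon
    have hkn : ν xl ⊓ ν xu ≤ n := inf_le_left.trans hl_le
    have hkne : ν xl ⊓ ν xu ≠ n := fun h => hl_ne (le_antisymm hl_le (h ▸ inf_le_left))
    have hxlxu : le n xl xu := trn hxlQn hxn hxuQn hxl_le hxu_ge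
    obtain ⟨z, hz, hz1, hz2⟩ := hnorm (ν xl) (ν xu) n hl_le hm_le xl hxlQl xu hxuQm hxlxu
    have hzn : z ∈ Q n := memn hkn hz
    have hz1' : le n xl z :=
      (hcompat (ν xl) n hl_le xl hxlQl z (hsub _ _ inf_le_left hz)).mp hz1
    have hz2' : le n z xu :=
      (hcompat (ν xu) n hm_le z (hsub _ _ inf_le_right hz) xu hxuQm).mp hz2
    obtain ⟨⟨a', ha'⟩, ⟨b', hb'⟩⟩ := hrc (ν xl ⊓ ν xu) n hkn xl hxlQn
    rcases hint (ν xl ⊓ ν xu) n hkn xl hxlQn x hxn hxl_le a' b'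
      (A (ν xl ⊓ ν xu)) (B (ν xl ⊓ ν xu)) ha' hb'
      ⟨hA1 _ hkn, hA2 _ hkn, hA3 _ hkn⟩ ⟨hB1 _ hkn, hB2 _ hkn, hB3 _ hkn⟩ with h | h
    · have hxlAk : xl = A (ν xl ⊓ ν xu) := hanti n xl hxlQn (A (ν xl ⊓ ν xu)) (hAn _ hkn)
        (trn hxlQn (memn hkn hb'.1) (hAn _ hkn) hb'.2.1 h) (hmax _ hkn hkne)
      exact h1 ((hxlmin _ (by rw [hxlAk]; exact hA1 _ hkn)).trans inf_le_right)
    · have hBkz : le n (B (ν xl ⊓ ν xu)) z := by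
        rw [← h.2]; exact hb'.2.2 z hz hz1'
      have hxuz : le n xu z := trn hxuQn (hBn _ hkn) hzn (hmin _ hkn hkne) hBkz
      have hzxu : z = xu := hanti n z hzn xu hxuQn hz2' hxuz
      exact h2 ((hxumin _ (hzxu ▸ hz)).trans inf_le_left)
  refine ⟨xl, xu,
    ⟨L2 n xl x hxlQn hxn hxl_le, hxl_ne, hνxl_lt, hxl_max⟩,
    ⟨L2 n x xu hxn hxuQn hxu_ge, hxu_ne, hνxu_lt, hxu_min⟩,
    hcompval, ?_, ?_⟩
  · intro i hi hli hmi
    have hin : i ≤ n ∧ i ≠ n := by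
      rcases hi with rfl | rfl
      · exact ⟨hl_le, hl_ne⟩
      · exact ⟨hm_le, hm_ne⟩
    refine ⟨⟨hsub _ _ hli hxlQl, L2 n xl x hxlQn hxn hxl_le, ?_⟩,
           ⟨hsub _ _ hmi hxuQm, L2 n x xu hxn hxuQn hxu_ge, ?_⟩⟩
    · intro p hp hpx
      have hpn : p ∈ Q n := memn hin.1 hp
      have h1 : le n p x := L3 n p x hpn hxn hpx
      have h2 : le n p (A i) := hA3 i hin.1 p hp h1
      exact L2 n p xl hpn hxlQn (trn hpn (hAn i hin.1) hxlQn h2 (hmax i hin.1 hin.2))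
    · intro p hp hxp
      have hpn : p ∈ Q n := memn hin.1 hp
      have h1 : le n x p := L3 n x p hxn hpn hxp
      have h2 : le n (B i) p := hB3 i hin.1 p hp h1
      exact L2 n xu p hxuQn hpn (trn hxuQn (hBn i hin.1) hpn (hmin i hin.1 hin.2) h2)
  · intro y hyP hnle
    obtain ⟨hyQ, -⟩ := hν y hyP
    constructor
    · intro hxy
      obtain ⟨z, hz, hz1, hz2⟩ := L4 n (ν y) x y hxy hxn hyQ
      have hkn : n ⊓ ν y ≤ n := inf_le_left
      have hkne : n ⊓ ν y ≠ n := fun h => hnle (by rw [← h]; exact inf_le_right)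
      have h2 : le n (B (n ⊓ ν y)) z := hB3 (n ⊓ ν y) hkn z hz hz1
      have h3 : le n xu z := trn hxuQn (hBn _ hkn) (memn hkn hz) (hmin _ hkn hkne) h2
      exact (hsle xu y).mpr ⟨n, ν y, hxuQn, hyQ, z, hz, h3, hz2⟩
    · intro hyx
      obtain ⟨z, hz, hz1, hz2⟩ := L4 (ν y) n y x hyx hyQ hxn
      have hkn : ν y ⊓ n ≤ n := inf_le_right
      have hkne : ν y ⊓ n ≠ n := fun h => hnle (by rw [← h]; exact inf_le_left)
      have h2 : le n z (A (ν y ⊓ n)) := hA3 _ hkn z hz hz2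
      have h3 : le n z xl := trn (memn hkn hz) (hAn _ hkn) hxlQn h2 (hmax _ hkn hkne)
      exact (hsle y xl).mpr ⟨ν y, n, hyQ, hxlQn, z, hz, hz1, h3⟩
end

section
/- Let S be a join-semilattice with least element 0, let R be a poset equipped with an S-valued p-measure μ, and let P ⊆ Q ⊆ R be subsets, each with the induced order. Assume that: Q is a relatively complete extension of P; R is a relatively complete extension of Q; R is an interval extension of P; for every x ∈ Q the elements μ(x, x_P) and μ(x^P, x) of S are comparable; and for every x ∈ R the elements μ(x, x_Q) and μ(x^Q, x) of S are comparable. Then for every x ∈ R, the elements μ(x, x_P) and μ(x^P, x) are comparable. -/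
/-- transitivity of doubling extensions. Let `μ` be an `S`-valued
p-measure on the ambient poset `R` (the type `α`), and let `P ⊆ Q ⊆ R`. If `Q` is a
relatively complete extension of `P`, `R` is a relatively complete extension of `Q`, `R`
is an interval extension of `P`, and the doubling conditions hold for `Q` over `P` and
for `R` over `Q`, then the doubling condition holds for `R` over `P`: for every `x ∈ R`,
`μ(x, x_P)` and `μ(x^P, x)` are comparable. -/
theorem stmt19 {S : Type*} [SemilatticeSup S] [OrderBot S]
    {α : Type*} [PartialOrder α] (μ : α → α → S)
    (hμtri : ∀ x y z : α, μ x z ≤ μ x y ⊔ μ y z)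
    (hμ0 : ∀ x y : α, x ≤ y → μ x y = ⊥)
    (P Q : Set α) (hPQ : P ⊆ Q)
    (hQrcP : ∀ x ∈ Q, (∃ a, IsGreatest {p | p ∈ P ∧ p ≤ x} a) ∧
      (∃ b, IsLeast {p | p ∈ P ∧ x ≤ p} b))
    (hRrcQ : ∀ x : α, (∃ a, IsGreatest {q | q ∈ Q ∧ q ≤ x} a) ∧
      (∃ b, IsLeast {q | q ∈ Q ∧ x ≤ q} b))
    (hRrcP : ∀ x : α, (∃ a, IsGreatest {p | p ∈ P ∧ p ≤ x} a) ∧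
      (∃ b, IsLeast {p | p ∈ P ∧ x ≤ p} b))
    (hRintP : ∀ x y : α, x ≤ y → ∀ a₁ b₁ a₂ b₂ : α,
      IsGreatest {p | p ∈ P ∧ p ≤ x} a₁ → IsLeast {p | p ∈ P ∧ x ≤ p} b₁ →
      IsGreatest {p | p ∈ P ∧ p ≤ y} a₂ → IsLeast {p | p ∈ P ∧ y ≤ p} b₂ →
      b₁ ≤ a₂ ∨ (a₁ = a₂ ∧ b₁ = b₂))
    (hdbQ : ∀ x ∈ Q, ∀ a b : α, IsGreatest {p | p ∈ P ∧ p ≤ x} a →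
      IsLeast {p | p ∈ P ∧ x ≤ p} b → (μ x a ≤ μ b x ∨ μ b x ≤ μ x a))
    (hdbR : ∀ x : α, ∀ a b : α, IsGreatest {q | q ∈ Q ∧ q ≤ x} a →
      IsLeast {q | q ∈ Q ∧ x ≤ q} b → (μ x a ≤ μ b x ∨ μ b x ≤ μ x a)) :
    ∀ x : α, ∀ a b : α, IsGreatest {p | p ∈ P ∧ p ≤ x} a →
      IsLeast {p | p ∈ P ∧ x ≤ p} b → (μ x a ≤ μ b x ∨ μ b x ≤ μ x a) := by
  intro x a b ha hb
  obtain ⟨⟨c, hc⟩, ⟨d, hd⟩⟩ := hRrcQ x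
  have hcQ : c ∈ Q := hc.1.1
  have hcx : c ≤ x := hc.1.2
  have hdQ : d ∈ Q := hd.1.1
  have hxd : x ≤ d := hd.1.2
  have hac : a ≤ c := hc.2 ⟨hPQ ha.1.1, ha.1.2⟩
  have hdb : d ≤ b := hd.2 ⟨hPQ hb.1.1, hb.1.2⟩
  obtain ⟨⟨a₁, ha₁⟩, ⟨b₁, hb₁⟩⟩ := hQrcP c hcQ
  obtain ⟨⟨a₂, ha₂⟩, ⟨b₂, hb₂⟩⟩ := hQrcP d hdQ
  have ha₁a : a₁ = a :=
    le_antisymm (ha.2 ⟨ha₁.1.1, ha₁.1.2.trans hcx⟩) (ha₁.2 ⟨ha.1.1, hac⟩)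
  have hbb₂ : b₂ = b :=
    le_antisymm (hb₂.2 ⟨hb.1.1, hdb⟩) (hb.2 ⟨hb₂.1.1, hxd.trans hb₂.1.2⟩)
  -- comparability of μ c a and μ b c
  have hst : μ c a ≤ μ b c ∨ μ b c ≤ μ c a := by
    rcases hRintP c x hcx a₁ b₁ a b ha₁ hb₁ ha hb with h | ⟨h1, h2⟩
    · left
      have hca : c ≤ a := hb₁.1.2.trans h
      simp [hμ0 c a hca]
    · subst h2
      exact hdbQ c hcQ a b₁ (ha₁a ▸ ha₁) hb₁
  -- comparability of μ d a and μ b d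
  have hst' : μ d a ≤ μ b d ∨ μ b d ≤ μ d a := by
    rcases hRintP x d hxd a b a₂ b₂ ha hb ha₂ hb₂ with h | ⟨h1, h2⟩
    · right
      have hbd : b ≤ d := h.trans ha₂.1.2
      simp [hμ0 b d hbd]
    · subst h1; subst h2
      exact hdbQ d hdQ a b ha₂ hb₂
  have huv : μ x c ≤ μ d x ∨ μ d x ≤ μ x c := hdbR x c d hc hd
  -- triangle facts
  have h1 : μ x c ≤ μ x a := by
    have := hμtri x a c; simpa [hμ0 a c hac] using this
  have h2 : μ c a ≤ μ x a := by
    have := hμtri c x a; simpa [hμ0 c x hcx] using this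
  have h3 : μ d x ≤ μ b x := by
    have := hμtri d b x; simpa [hμ0 d b hdb] using this
  have h4 : μ b d ≤ μ b x := by
    have := hμtri b x d; simpa [hμ0 x d hxd] using this
  have h5 : μ x a ≤ μ d a := by
    have := hμtri x d a; simpa [hμ0 x d hxd] using this
  have h6 : μ b x ≤ μ b c := by
    have := hμtri b c x; simpa [hμ0 c x hcx] using this
  have h7 : μ d a ≤ μ d x ⊔ μ x a := hμtri d x a
  have h8 : μ b c ≤ μ b x ⊔ μ x c := hμtri b x c
  have h9 : μ x a ≤ μ x c ⊔ μ c a := hμtri x c a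
  have h10 : μ b x ≤ μ b d ⊔ μ d x := hμtri b d x
  rcases hst with hs | ht
  · rcases hst' with hs' | ht'
    · exact Or.inl (h5.trans (hs'.trans h4))
    · rcases huv with hu | hv
      · -- u ≤ v : A ≤ B
        left
        have : μ x a ≤ μ x c ⊔ μ b c := h9.trans (sup_le_sup_left hs _)
        have h8' : μ b c ≤ μ b x := by
          have := h8.trans (sup_le_sup_left (hu.trans h3) _)
          simpa using this
        calc μ x a ≤ μ x c ⊔ μ b c := this
          _ ≤ μ b x ⊔ μ b x := sup_le_sup ((hu.trans h3)) h8'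
          _ = μ b x := sup_idem _
      · -- v ≤ u : B ≤ A
        right
        have h7' : μ d a ≤ μ x a := by
          have := h7.trans (sup_le_sup_right (hv.trans h1) _)
          simpa using this
        calc μ b x ≤ μ b d ⊔ μ d x := h10
          _ ≤ μ d a ⊔ μ x a := sup_le_sup ht' ((hv.trans h1))
          _ ≤ μ x a ⊔ μ x a := sup_le_sup h7' le_rfl
          _ = μ x a := sup_idem _
  · exact Or.inr (h6.trans (ht.trans h2))
end
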